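/- arXiv:1206.1193 — 9 statements merged into one kernel-verified Lean document; each statement's English description precedes it below -/
import Mathlib

section
/- Let h : J ⊂ ℝ → ℝ be a non-negative function with h(α) ≥ α for all α ∈ (0,1), and let f : I ⊂ [0,∞) → ℝ be a differentiable function on the interior of I with h^q, f′ ∈ L[a,b], where a, b are interior points of I with a < b. Let p, q > 1 with 1/p + 1/q = 1. If |f′| is h-convex on I, then |(1/(b−a)) ∫_a^b f(x) dx − (1/3)[(f(a)+f(b))/2 + 2 f((a+b)/2)]| ≤ ((b−a)/3) ((1 + 2^{p+1})/(6(p+1)))^{1/p} · { |f′(a)| [ (∫_0^{1/2} h(t)^q dt)^{1/q} + (∫_{1/2}^1 h(t)^q dt)^{1/q} ] + |f′(b)| [ (∫_0^{1/2} h(1−t)^q dt)^{1/q} + (∫_{1/2}^1 h(1−t)^q dt)^{1/q} ] }. -/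
/-!
Substituting `x = t a + (1 - t) b` and integrating by parts against the Peano kernel of Simpson's
rule (`t - 1/6` on `[0, 1/2]`, `t - 5/6` on `[1/2, 1]`) writes the Simpson error as `(b - a)` times
`∫ k(t) f'(t a + (1 - t) b) dt`. The `h`-convexity of `|f'|` bounds the integrand by
`|k(t)| (|f'(a)| h(t) + |f'(b)| h(1 - t))`, and Hölder's inequality on each half separates the
explicit `Lᵖ` norm of the kernel from the `L^q` norms of `h` and `h(1 - ·)`. This gives the bound
even with `(b - a)/6` in place of `(b - a)/3`.
-/

open MeasureTheory Set intervalIntegral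

lemma ae_restrict_of_forall_mem_of_ae_eq {X : Type*} [MeasurableSpace X] {μ : Measure X}
    {s t : Set X} {P : X → Prop} (hts : t =ᵐ[μ] s) (ht : MeasurableSet t)
    (hP : ∀ x ∈ t, P x) : ∀ᵐ x ∂μ.restrict s, P x := by
  rw [← Measure.restrict_congr_set hts]
  exact ae_restrict_of_forall_mem ht hP

lemma memLp_ofReal_of_integrable_rpow {X : Type*} [MeasurableSpace X] {μ : Measure X} {q : ℝ}
    (hq : 0 < q) {u : X → ℝ} (hu : 0 ≤ᵐ[μ] u) (hint : Integrable (fun x => u x ^ q) μ) :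
    MemLp u (ENNReal.ofReal q) μ := by
  have hmeas : AEStronglyMeasurable u μ := by
    refine ((hint.aemeasurable.pow_const q⁻¹).congr ?_).aestronglyMeasurable
    filter_upwards [hu] with x hx using Real.rpow_rpow_inv hx hq.ne'
  refine (integrable_norm_rpow_iff hmeas (by simpa using hq) ENNReal.ofReal_ne_top).1 ?_
  rw [ENNReal.toReal_ofReal hq.le]
  refine hint.congr ?_
  filter_upwards [hu] with x hx
  rw [Real.norm_of_nonneg hx]

section Interval

variable {a b : ℝ}

lemma memLp_restrict_Ioc_of_intervalIntegrable_rpow {q : ℝ} (hq : 0 < q) (hab : a ≤ b)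
    {u : ℝ → ℝ} (hu : ∀ t ∈ Ioo a b, 0 ≤ u t)
    (hint : IntervalIntegrable (fun t => u t ^ q) volume a b) :
    MemLp u (ENNReal.ofReal q) (volume.restrict (Ioc a b)) :=
  memLp_ofReal_of_integrable_rpow hq
    (ae_restrict_of_forall_mem_of_ae_eq Ioo_ae_eq_Ioc measurableSet_Ioo hu)
    ((intervalIntegrable_iff_integrableOn_Ioc_of_le hab).1 hint)

lemma IntervalIntegrable.of_rpow {q : ℝ} (hq : 1 ≤ q) (hab : a ≤ b) {u : ℝ → ℝ}
    (hu : ∀ t ∈ Ioo a b, 0 ≤ u t) (hint : IntervalIntegrable (fun t => u t ^ q) volume a b) :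
    IntervalIntegrable u volume a b :=
  (intervalIntegrable_iff_integrableOn_Ioc_of_le hab).2 <|
    (memLp_restrict_Ioc_of_intervalIntegrable_rpow (by linarith) hab hu hint).integrable
      (by simpa using hq)

lemma intervalIntegral.integral_mul_le_Lp_mul_Lq_of_nonneg {p q : ℝ} (hpq : p.HolderConjugate q)
    (hab : a ≤ b) {u v : ℝ → ℝ} (hu : ∀ t ∈ Ioo a b, 0 ≤ u t) (hv : ∀ t ∈ Ioo a b, 0 ≤ v t)
    (hup : IntervalIntegrable (fun t => u t ^ p) volume a b)
    (hvq : IntervalIntegrable (fun t => v t ^ q) volume a b) :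
    ∫ t in a..b, u t * v t ≤
      (∫ t in a..b, u t ^ p) ^ (1 / p) * (∫ t in a..b, v t ^ q) ^ (1 / q) := by
  simp only [integral_of_le hab]
  exact MeasureTheory.integral_mul_le_Lp_mul_Lq_of_nonneg hpq
    (ae_restrict_of_forall_mem_of_ae_eq Ioo_ae_eq_Ioc measurableSet_Ioo hu)
    (ae_restrict_of_forall_mem_of_ae_eq Ioo_ae_eq_Ioc measurableSet_Ioo hv)
    (memLp_restrict_Ioc_of_intervalIntegrable_rpow hpq.pos hab hu hup)
    (memLp_restrict_Ioc_of_intervalIntegrable_rpow hpq.symm.pos hab hv hvq)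

lemma integral_abs_mul_le_of_abs_le_add {p q : ℝ} (hpq : p.HolderConjugate q) (hab : a ≤ b)
    {k F u v : ℝ → ℝ} (hk : Continuous k) (hF : IntervalIntegrable F volume a b)
    (hu : ∀ t ∈ Ioo a b, 0 ≤ u t) (hv : ∀ t ∈ Ioo a b, 0 ≤ v t)
    (huq : IntervalIntegrable (fun t => u t ^ q) volume a b)
    (hvq : IntervalIntegrable (fun t => v t ^ q) volume a b) {A B : ℝ} (hA : 0 ≤ A) (hB : 0 ≤ B)
    (hFuv : ∀ t ∈ Ioo a b, |F t| ≤ A * u t + B * v t) :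
    ∫ t in a..b, |k t| * |F t| ≤ (∫ t in a..b, |k t| ^ p) ^ (1 / p) *
      (A * (∫ t in a..b, u t ^ q) ^ (1 / q) + B * (∫ t in a..b, v t ^ q) ^ (1 / q)) := by
  have hkp : IntervalIntegrable (fun t => |k t| ^ p) volume a b :=
    (hk.abs.rpow_const fun _ => Or.inr hpq.nonneg).intervalIntegrable _ _
  have hku : IntervalIntegrable (fun t => |k t| * u t) volume a b :=
    (huq.of_rpow hpq.symm.lt.le hab hu).continuousOn_mul hk.abs.continuousOn
  have hkv : IntervalIntegrable (fun t => |k t| * v t) volume a b :=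
    (hvq.of_rpow hpq.symm.lt.le hab hv).continuousOn_mul hk.abs.continuousOn
  have hk0 : ∀ t ∈ Ioo a b, 0 ≤ |k t| := fun t _ => abs_nonneg (k t)
  calc ∫ t in a..b, |k t| * |F t|
      ≤ ∫ t in a..b, A * (|k t| * u t) + B * (|k t| * v t) := by
        refine integral_mono_on_of_le_Ioo hab (hF.abs.continuousOn_mul hk.abs.continuousOn)
          ((hku.const_mul A).add (hkv.const_mul B)) fun t ht => ?_
        calc |k t| * |F t| ≤ |k t| * (A * u t + B * v t) :=
              mul_le_mul_of_nonneg_left (hFuv t ht) (abs_nonneg _)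
          _ = A * (|k t| * u t) + B * (|k t| * v t) := by ring
    _ = A * (∫ t in a..b, |k t| * u t) + B * ∫ t in a..b, |k t| * v t := by
        rw [integral_add (hku.const_mul A) (hkv.const_mul B), intervalIntegral.integral_const_mul,
          intervalIntegral.integral_const_mul]
    _ ≤ A * ((∫ t in a..b, |k t| ^ p) ^ (1 / p) * (∫ t in a..b, u t ^ q) ^ (1 / q)) +
        B * ((∫ t in a..b, |k t| ^ p) ^ (1 / p) * (∫ t in a..b, v t ^ q) ^ (1 / q)) := by
        gcongr
        · exact intervalIntegral.integral_mul_le_Lp_mul_Lq_of_nonneg hpq hab hk0 hu hkp huq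
        · exact intervalIntegral.integral_mul_le_Lp_mul_Lq_of_nonneg hpq hab hk0 hv hkp hvq
    _ = _ := by ring

lemma integral_abs_sub_rpow {p : ℝ} (hp : 0 ≤ p) {c : ℝ} (hac : a ≤ c) (hcb : c ≤ b) :
    ∫ t in a..b, |t - c| ^ p = ((c - a) ^ (p + 1) + (b - c) ^ (p + 1)) / (p + 1) := by
  have hcont : Continuous fun t : ℝ => |t - c| ^ p :=
    (continuous_id.sub continuous_const).abs.rpow_const fun _ => Or.inr hp
  have hleft : ∫ t in a..c, |t - c| ^ p = (c - a) ^ (p + 1) / (p + 1) := by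
    rw [integral_congr (g := fun t => (c - t) ^ p) fun t ht => by
      rw [uIcc_of_le hac] at ht
      rw [abs_of_nonpos (by linarith [ht.2]), neg_sub]]
    rw [integral_comp_sub_left (fun s => s ^ p) c, sub_self, integral_rpow (by left; linarith),
      Real.zero_rpow (by linarith), sub_zero]
  have hright : ∫ t in c..b, |t - c| ^ p = (b - c) ^ (p + 1) / (p + 1) := by
    rw [integral_congr (g := fun t => (t - c) ^ p) fun t ht => by
      rw [uIcc_of_le hcb] at ht
      rw [abs_of_nonneg (by linarith [ht.1])]]
    rw [integral_comp_sub_right (fun s => s ^ p) c, sub_self, integral_rpow (by left; linarith),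
      Real.zero_rpow (by linarith), sub_zero]
  rw [← integral_add_adjacent_intervals (hcont.intervalIntegrable a c)
    (hcont.intervalIntegrable c b), hleft, hright, add_div]

lemma abs_integral_sub_mul_le {p q : ℝ} (hpq : p.HolderConjugate q) {c : ℝ} (hac : a ≤ c)
    (hcb : c ≤ b) {F u v : ℝ → ℝ} (hF : IntervalIntegrable F volume a b)
    (hu : ∀ t ∈ Ioo a b, 0 ≤ u t) (hv : ∀ t ∈ Ioo a b, 0 ≤ v t)
    (huq : IntervalIntegrable (fun t => u t ^ q) volume a b)
    (hvq : IntervalIntegrable (fun t => v t ^ q) volume a b) {A B : ℝ} (hA : 0 ≤ A) (hB : 0 ≤ B)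
    (hFuv : ∀ t ∈ Ioo a b, |F t| ≤ A * u t + B * v t) :
    |∫ t in a..b, (t - c) * F t| ≤ (((c - a) ^ (p + 1) + (b - c) ^ (p + 1)) / (p + 1)) ^ (1 / p) *
      (A * (∫ t in a..b, u t ^ q) ^ (1 / q) + B * (∫ t in a..b, v t ^ q) ^ (1 / q)) := by
  calc |∫ t in a..b, (t - c) * F t|
      ≤ ∫ t in a..b, |t - c| * |F t| := by
        simpa only [abs_mul] using
          abs_integral_le_integral_abs (f := fun t => (t - c) * F t) (hac.trans hcb)
    _ ≤ _ := integral_abs_mul_le_of_abs_le_add hpq (hac.trans hcb)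
        (k := fun t => t - c) (continuous_id.sub continuous_const) hF hu hv huq hvq hA hB hFuv
    _ = _ := by rw [integral_abs_sub_rpow hpq.nonneg hac hcb]

end Interval

lemma integral_sub_mul_deriv {g g' : ℝ → ℝ} {a b : ℝ} (c : ℝ)
    (hg : ∀ t ∈ uIcc a b, HasDerivAt g (g' t) t) (hg' : IntervalIntegrable g' volume a b) :
    ∫ t in a..b, (t - c) * g' t = (b - c) * g b - (a - c) * g a - ∫ t in a..b, g t := by
  simpa only [one_mul] using integral_mul_deriv_eq_deriv_mul
    (fun t _ => (hasDerivAt_id' t).sub_const c) hg intervalIntegrable_const hg'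

theorem simpson_kernel_integral_eq {g g' : ℝ → ℝ}
    (hg : ∀ t ∈ Icc (0 : ℝ) 1, HasDerivAt g (g' t) t)
    (hg' : IntervalIntegrable g' volume 0 1) :
    (∫ t in (0 : ℝ)..1 / 2, (t - 1 / 6) * g' t) + ∫ t in (1 / 2 : ℝ)..1, (t - 5 / 6) * g' t =
      1 / 3 * ((g 0 + g 1) / 2 + 2 * g (1 / 2)) - ∫ t in (0 : ℝ)..1, g t := by
  rw [← uIcc_of_le zero_le_one] at hg
  have hmid : (1 / 2 : ℝ) ∈ uIcc 0 1 := by rw [uIcc_of_le zero_le_one]; norm_num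
  have hgc : ContinuousOn g (uIcc 0 1) := fun t ht => (hg t ht).continuousAt.continuousWithinAt
  rw [integral_sub_mul_deriv _ (fun t ht => hg t (uIcc_subset_uIcc_left hmid ht))
      (hg'.mono_set (uIcc_subset_uIcc_left hmid)),
    integral_sub_mul_deriv _ (fun t ht => hg t (uIcc_subset_uIcc_right hmid ht))
      (hg'.mono_set (uIcc_subset_uIcc_right hmid)),
    ← integral_add_adjacent_intervals (b := 1 / 2)
      ((hgc.mono (uIcc_subset_uIcc_left hmid)).intervalIntegrable)
      ((hgc.mono (uIcc_subset_uIcc_right hmid)).intervalIntegrable)]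
  ring

lemma IntervalIntegrable.comp_mul_add_one_sub_mul {f : ℝ → ℝ} {a b : ℝ}
    (hf : IntervalIntegrable f volume a b) :
    IntervalIntegrable (fun t => f (t * a + (1 - t) * b)) volume 0 1 := by
  rcases eq_or_ne a b with rfl | hab
  · simp [← add_mul]
  have h := (hf.comp_add_right b).comp_mul_left (c := a - b)
  rw [sub_self, zero_div, div_self (sub_ne_zero.2 hab)] at h
  convert h.symm using 2 with t
  ring_nf

-- The integrand is `f x - S`: this is how the left-hand side of `simpson_hconvex_holder` parses.
theorem simpson_error_eq {f f' : ℝ → ℝ} {a b : ℝ} (hab : a ≠ b)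
    (hf : ∀ x ∈ uIcc a b, HasDerivAt f (f' x) x) (hf' : IntervalIntegrable f' volume a b) :
    1 / (b - a) * ∫ x in a..b, (f x - 1 / 3 * ((f a + f b) / 2 + 2 * f ((a + b) / 2))) =
      (b - a) * ((∫ t in (0 : ℝ)..1 / 2, (t - 1 / 6) * f' (t * a + (1 - t) * b)) +
        ∫ t in (1 / 2 : ℝ)..1, (t - 5 / 6) * f' (t * a + (1 - t) * b)) := by
  have hmem : ∀ t ∈ Icc (0 : ℝ) 1, t * a + (1 - t) * b ∈ uIcc a b := fun t ht => by
    rw [← segment_eq_uIcc]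
    exact ⟨t, 1 - t, ht.1, by linarith [ht.2], by ring, by simp only [smul_eq_mul]⟩
  have hg : ∀ t ∈ Icc (0 : ℝ) 1, HasDerivAt (fun t => f (t * a + (1 - t) * b))
      ((a - b) * f' (t * a + (1 - t) * b)) t := fun t ht => by
    have hline : HasDerivAt (fun t : ℝ => t * a + (1 - t) * b) (a - b) t :=
      (((hasDerivAt_id' t).mul_const a).add
        (((hasDerivAt_id' t).const_sub 1).mul_const b)).congr_deriv (by ring)
    exact ((hf _ (hmem t ht)).comp t hline).congr_deriv (mul_comm _ _)
  have hsubst : ∫ t in (0 : ℝ)..1, f (t * a + (1 - t) * b) = 1 / (b - a) * ∫ x in a..b, f x := by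
    simp_rw [show ∀ t : ℝ, t * a + (1 - t) * b = (a - b) * t + b from fun t => by ring]
    rw [integral_comp_mul_add _ (sub_ne_zero.2 hab), mul_one, mul_zero, zero_add, sub_add_cancel,
      integral_symm, smul_eq_mul, mul_neg, ← neg_mul, ← inv_neg, neg_sub, one_div]
  have key := simpson_kernel_integral_eq hg (hf'.comp_mul_add_one_sub_mul.const_mul (a - b))
  simp only [mul_left_comm _ (a - b), intervalIntegral.integral_const_mul, hsubst] at key
  rw [show (0 : ℝ) * a + (1 - 0) * b = b by ring, show (1 : ℝ) * a + (1 - 1) * b = a by ring,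
    show (1 / 2 : ℝ) * a + (1 - 1 / 2) * b = (a + b) / 2 by ring] at key
  rw [integral_sub (HasDerivAt.continuousOn hf).intervalIntegrable intervalIntegrable_const,
    intervalIntegral.integral_const, smul_eq_mul, mul_sub, ← mul_assoc,
    one_div_mul_cancel (sub_ne_zero.2 hab.symm), one_mul]
  linear_combination key

lemma simpson_kernel_Lp_norm_eq {p : ℝ} (hp : 0 < p) :
    (((1 / 6 : ℝ) ^ (p + 1) + (1 / 3) ^ (p + 1)) / (p + 1)) ^ (1 / p) =
      1 / 6 * ((1 + 2 ^ (p + 1)) / (6 * (p + 1))) ^ (1 / p) := by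
  have hC : (0 : ℝ) ≤ (1 + 2 ^ (p + 1)) / (6 * (p + 1)) := by
    have : (0 : ℝ) < 2 ^ (p + 1) := Real.rpow_pos_of_pos two_pos _
    positivity
  have hfactor : ((1 / 6 : ℝ) ^ (p + 1) + (1 / 3) ^ (p + 1)) / (p + 1) =
      (1 + 2 ^ (p + 1)) / (6 * (p + 1)) * (1 / 6) ^ p := by
    rw [show (1 / 3 : ℝ) = 2 * (1 / 6) by norm_num, Real.mul_rpow two_pos.le (by norm_num),
      Real.rpow_add_one (by norm_num)]
    field_simp
  rw [hfactor, Real.mul_rpow hC (by positivity), ← Real.rpow_mul (by norm_num),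
    mul_one_div_cancel hp.ne', Real.rpow_one, mul_comm]

theorem abs_simpson_kernel_integral_le {p q : ℝ} (hpq : p.HolderConjugate q) {F u v : ℝ → ℝ}
    (hF : IntervalIntegrable F volume 0 1)
    (hu : ∀ t ∈ Ioo (0 : ℝ) 1, 0 ≤ u t) (hv : ∀ t ∈ Ioo (0 : ℝ) 1, 0 ≤ v t)
    (huq : IntervalIntegrable (fun t => u t ^ q) volume 0 1)
    (hvq : IntervalIntegrable (fun t => v t ^ q) volume 0 1) {A B : ℝ} (hA : 0 ≤ A) (hB : 0 ≤ B)
    (hFuv : ∀ t ∈ Ioo (0 : ℝ) 1, |F t| ≤ A * u t + B * v t) :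
    |(∫ t in (0 : ℝ)..1 / 2, (t - 1 / 6) * F t) + ∫ t in (1 / 2 : ℝ)..1, (t - 5 / 6) * F t| ≤
      1 / 6 * ((1 + 2 ^ (p + 1)) / (6 * (p + 1))) ^ (1 / p) *
        (A * ((∫ t in (0 : ℝ)..1 / 2, u t ^ q) ^ (1 / q) +
            (∫ t in (1 / 2 : ℝ)..1, u t ^ q) ^ (1 / q)) +
          B * ((∫ t in (0 : ℝ)..1 / 2, v t ^ q) ^ (1 / q) +
            (∫ t in (1 / 2 : ℝ)..1, v t ^ q) ^ (1 / q))) := by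
  have hleft : Ioo (0 : ℝ) (1 / 2) ⊆ Ioo 0 1 := Ioo_subset_Ioo_right (by norm_num)
  have hright : Ioo (1 / 2 : ℝ) 1 ⊆ Ioo 0 1 := Ioo_subset_Ioo_left (by norm_num)
  have hmid : (1 / 2 : ℝ) ∈ uIcc 0 1 := by rw [uIcc_of_le zero_le_one]; norm_num
  have h₁ := abs_integral_sub_mul_le hpq (c := 1 / 6) (by norm_num) (by norm_num)
    (hF.mono_set (uIcc_subset_uIcc_left hmid)) (fun t ht => hu t (hleft ht))
    (fun t ht => hv t (hleft ht)) (huq.mono_set (uIcc_subset_uIcc_left hmid))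
    (hvq.mono_set (uIcc_subset_uIcc_left hmid)) hA hB fun t ht => hFuv t (hleft ht)
  have h₂ := abs_integral_sub_mul_le hpq (c := 5 / 6) (by norm_num) (by norm_num)
    (hF.mono_set (uIcc_subset_uIcc_right hmid)) (fun t ht => hu t (hright ht))
    (fun t ht => hv t (hright ht)) (huq.mono_set (uIcc_subset_uIcc_right hmid))
    (hvq.mono_set (uIcc_subset_uIcc_right hmid)) hA hB fun t ht => hFuv t (hright ht)
  rw [show (1 / 6 : ℝ) - 0 = 1 / 6 by norm_num, show (1 / 2 : ℝ) - 1 / 6 = 1 / 3 by norm_num,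
    simpson_kernel_Lp_norm_eq hpq.pos] at h₁
  rw [show (5 / 6 : ℝ) - 1 / 2 = 1 / 3 by norm_num, show (1 : ℝ) - 5 / 6 = 1 / 6 by norm_num,
    add_comm ((1 / 3 : ℝ) ^ (p + 1)), simpson_kernel_Lp_norm_eq hpq.pos] at h₂
  linarith [abs_add_le (∫ t in (0 : ℝ)..1 / 2, (t - 1 / 6) * F t)
    (∫ t in (1 / 2 : ℝ)..1, (t - 5 / 6) * F t)]

theorem simpson_hconvex_holder_general
    (I : Set ℝ) (hIc : I.OrdConnected)
    (h f f' : ℝ → ℝ) (a b : ℝ)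
    (ha : a ∈ interior I) (hb : b ∈ interior I) (hab : a < b)
    (hh0 : ∀ t ∈ Set.Ioo (0:ℝ) 1, 0 ≤ h t)
    (p q : ℝ) (hp : 1 < p) (hpq : 1/p + 1/q = 1)
    (hderiv : ∀ x ∈ interior I, HasDerivAt f (f' x) x)
    (hfint : IntervalIntegrable f' volume a b)
    (hhint : IntervalIntegrable (fun t => h t ^ q) volume 0 1)
    (hconv : ∀ x ∈ I, ∀ y ∈ I, ∀ t ∈ Set.Ioo (0:ℝ) 1,
      |f' (t*x + (1-t)*y)| ≤ h t * |f' x| + h (1-t) * |f' y|) :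
    |(1/(b-a)) * ∫ x in a..b, f x
        - (1/3) * ((f a + f b)/2 + 2 * f ((a+b)/2))|
      ≤ ((b-a)/3) * ((1 + 2^(p+1))/(6*(p+1)))^(1/p) *
        (|f' a| * ((∫ t in (0:ℝ)..(1/2), h t ^ q)^(1/q)
                    + (∫ t in (1/2:ℝ)..1, h t ^ q)^(1/q))
          + |f' b| * ((∫ t in (0:ℝ)..(1/2), h (1-t) ^ q)^(1/q)
                    + (∫ t in (1/2:ℝ)..1, h (1-t) ^ q)^(1/q))) := by
  have hpq' : p.HolderConjugate q :=
    Real.holderConjugate_iff.2 ⟨hp, by simpa only [one_div] using hpq⟩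
  have hderiv' : ∀ x ∈ uIcc a b, HasDerivAt f (f' x) x :=
    fun x hx => hderiv x (hIc.interior.uIcc_subset ha hb hx)
  have hh0' : ∀ t ∈ Ioo (0 : ℝ) 1, 0 ≤ h (1 - t) :=
    fun t ht => hh0 (1 - t) ⟨by linarith [ht.2], by linarith [ht.1]⟩
  have hhint' : IntervalIntegrable (fun t => h (1 - t) ^ q) volume 0 1 := by
    simpa using (hhint.comp_sub_left 1).symm
  have hf'h : ∀ t ∈ Ioo (0 : ℝ) 1,
      |f' (t * a + (1 - t) * b)| ≤ |f' a| * h t + |f' b| * h (1 - t) := fun t ht =>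
    (hconv a (interior_subset ha) b (interior_subset hb) t ht).trans_eq (by ring)
  have hS := abs_simpson_kernel_integral_le hpq' hfint.comp_mul_add_one_sub_mul hh0 hh0' hhint
    hhint' (abs_nonneg _) (abs_nonneg _) hf'h
  have hba : 0 < b - a := sub_pos.2 hab
  rw [simpson_error_eq hab.ne hderiv' hfint, abs_mul, abs_of_pos hba]
  nlinarith [mul_le_mul_of_nonneg_left hS hba.le, mul_nonneg hba.le ((abs_nonneg _).trans hS)]

/-- Simpson-type inequality for functions whose derivative has `h`-convex absolute value,
via Hölder's inequality with conjugate exponents `p, q`. -/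
theorem simpson_hconvex_holder
    (I : Set ℝ) (hI : I ⊆ Set.Ici (0:ℝ)) (hIc : I.OrdConnected)
    (h f f' : ℝ → ℝ) (a b : ℝ)
    (ha : a ∈ interior I) (hb : b ∈ interior I) (hab : a < b)
    (hh0 : ∀ t ∈ Set.Ioo (0:ℝ) 1, 0 ≤ h t)
    (hha : ∀ t ∈ Set.Ioo (0:ℝ) 1, t ≤ h t)
    (p q : ℝ) (hp : 1 < p) (hq : 1 < q) (hpq : 1/p + 1/q = 1)
    (hderiv : ∀ x ∈ interior I, HasDerivAt f (f' x) x)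
    (hfint : IntervalIntegrable f' volume a b)
    (hhint : IntervalIntegrable (fun t => h t ^ q) volume 0 1)
    (hconv : ∀ x ∈ I, ∀ y ∈ I, ∀ t ∈ Set.Ioo (0:ℝ) 1,
      |f' (t*x + (1-t)*y)| ≤ h t * |f' x| + h (1-t) * |f' y|) :
    |(1/(b-a)) * ∫ x in a..b, f x
        - (1/3) * ((f a + f b)/2 + 2 * f ((a+b)/2))|
      ≤ ((b-a)/3) * ((1 + 2^(p+1))/(6*(p+1)))^(1/p) *
        (|f' a| * ((∫ t in (0:ℝ)..(1/2), h t ^ q)^(1/q)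
                    + (∫ t in (1/2:ℝ)..1, h t ^ q)^(1/q))
          + |f' b| * ((∫ t in (0:ℝ)..(1/2), h (1-t) ^ q)^(1/q)
                    + (∫ t in (1/2:ℝ)..1, h (1-t) ^ q)^(1/q))) :=
  simpson_hconvex_holder_general I hIc h f f' a b ha hb hab hh0 p q hp hpq hderiv hfint hhint hconv
end

section
/- Let f : I ⊂ [0,∞) → ℝ be differentiable on the interior of I with f′ ∈ L[a,b], where a, b are interior points of I with a < b, and suppose f(a) = f((a+b)/2) = f(b). Let p, q > 1 with 1/p + 1/q = 1. If |f′| is a P-function on I (i.e. |f′(t x + (1−t) y)| ≤ |f′(x)| + |f′(y)| for all x, y ∈ I, t ∈ [0,1]), then |(1/(b−a)) ∫_a^b f(x) dx − f((a+b)/2)| ≤ ((b−a)/3) ((1 + 2^{p+1})/(3(p+1)))^{1/p} [ |f′(a)| + |f′(b)| ]. -/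
open MeasureTheory Set

/-!
On `[a, b]` the `P`-function inequality bounds `|f'|` by `M = |f' a| + |f' b|`, so by the mean
value theorem `|f x - f m| ≤ M |x - m|` with `m = (a + b) / 2`; integrating gives
`|∫ (f - f m)| ≤ M (b - a)² / 4`. This is already the claimed bound, because the Hölder constant is
at least `3 / 4` for `p ≥ 1`: the tangent line of `2 ^ (p + 1)` at `p = 1` and `log 2 > 9 / 16`
give `1 + 2 ^ (p + 1) ≥ 9 (p + 1) / 4`.
-/

theorem le_add_of_mem_segment {E : Type*} [AddCommGroup E] [Module ℝ E] {s : Set E}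
    {g : E → ℝ} (hg : ∀ x ∈ s, ∀ y ∈ s, ∀ t ∈ Icc (0 : ℝ) 1, g (t • x + (1 - t) • y) ≤ g x + g y)
    {x y z : E} (hx : x ∈ s) (hy : y ∈ s) (hz : z ∈ segment ℝ x y) : g z ≤ g x + g y := by
  obtain ⟨t, u, ht, hu, htu, rfl⟩ := hz
  obtain rfl : u = 1 - t := by linarith
  exact hg x hx y hy t ⟨ht, by linarith⟩

theorem integral_abs_sub_of_mem_Icc {a b c : ℝ} (hc : c ∈ Icc a b) :
    ∫ x in a..b, |x - c| = ((c - a) ^ 2 + (b - c) ^ 2) / 2 := by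
  have hint : ∀ u v : ℝ, IntervalIntegrable (fun x => |x - c|) volume u v := fun u v =>
    (by fun_prop : Continuous fun x => |x - c|).intervalIntegrable u v
  have left : ∫ x in a..c, |x - c| = ∫ x in a..c, -(x - c) :=
    intervalIntegral.integral_congr fun x hx => by
      rw [uIcc_of_le hc.1] at hx; exact abs_of_nonpos (by linarith [hx.2])
  have right : ∫ x in c..b, |x - c| = ∫ x in c..b, (x - c) :=
    intervalIntegral.integral_congr fun x hx => by
      rw [uIcc_of_le hc.2] at hx; exact abs_of_nonneg (by linarith [hx.1])
  rw [← intervalIntegral.integral_add_adjacent_intervals (hint a c) (hint c b), left, right,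
    intervalIntegral.integral_neg]
  simp only [intervalIntegral.intervalIntegrable_id, intervalIntegrable_const,
    intervalIntegral.integral_sub, integral_id, intervalIntegral.integral_const, smul_eq_mul]
  ring

theorem abs_integral_sub_le_of_abs_deriv_le {f f' : ℝ → ℝ} {a b c M : ℝ} (hab : a ≤ b)
    (hf : ∀ x ∈ Icc a b, HasDerivWithinAt f (f' x) (Icc a b) x)
    (hf' : ∀ x ∈ Icc a b, |f' x| ≤ M) (hc : c ∈ Icc a b) :
    |∫ x in a..b, f x - f c| ≤ M * (((c - a) ^ 2 + (b - c) ^ 2) / 2) := by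
  have hlip : ∀ x ∈ Icc a b, |f x - f c| ≤ M * |x - c| := fun x hx =>
    Convex.norm_image_sub_le_of_norm_hasDerivWithin_le hf hf' (convex_Icc a b) hc hx
  have hcont : ContinuousOn (fun x => f x - f c) (uIcc a b) := by
    rw [uIcc_of_le hab]
    exact fun x hx => (hf x hx).continuousWithinAt.sub continuousWithinAt_const
  calc |∫ x in a..b, f x - f c| ≤ ∫ x in a..b, |f x - f c| :=
        intervalIntegral.abs_integral_le_integral_abs hab
    _ ≤ ∫ x in a..b, M * |x - c| :=
        intervalIntegral.integral_mono_on hab hcont.intervalIntegrable.abs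
          ((by fun_prop : Continuous fun x => M * |x - c|).intervalIntegrable a b) hlip
    _ = M * (((c - a) ^ 2 + (b - c) ^ 2) / 2) := by
        rw [intervalIntegral.integral_const_mul, integral_abs_sub_of_mem_Icc hc]

theorem three_div_four_le_holder_const {p : ℝ} (hp : 1 ≤ p) :
    3 / 4 ≤ ((1 + 2 ^ (p + 1)) / (3 * (p + 1))) ^ (1 / p) := by
  have hlog : 9 / 16 < Real.log 2 := by linarith [Real.log_two_gt_d9]
  have htangent : 4 * (1 + (p - 1) * Real.log 2) ≤ (2 : ℝ) ^ (p + 1) := by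
    rw [show p + 1 = (p - 1) + 2 by ring, Real.rpow_add two_pos, Real.rpow_two,
      Real.rpow_def_of_pos two_pos, mul_comm (Real.log 2)]
    nlinarith [Real.add_one_le_exp ((p - 1) * Real.log 2)]
  have hbase : 3 / 4 ≤ (1 + 2 ^ (p + 1)) / (3 * (p + 1)) := by
    rw [le_div_iff₀ (by linarith)]
    nlinarith
  calc (3 / 4 : ℝ) = (3 / 4) ^ (1 : ℝ) := (Real.rpow_one _).symm
    _ ≤ (3 / 4) ^ (1 / p) :=
      Real.rpow_le_rpow_of_exponent_ge (by norm_num) (by norm_num)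
        ((div_le_one (by linarith)).mpr hp)
    _ ≤ _ := Real.rpow_le_rpow (by norm_num) hbase (by positivity)

theorem simpson_Pfunction_holder_general
    (I : Set ℝ) (hIc : I.OrdConnected)
    (f f' : ℝ → ℝ) (a b : ℝ)
    (ha : a ∈ interior I) (hb : b ∈ interior I) (hab : a < b)
    (p : ℝ) (hp : 1 < p)
    (hderiv : ∀ x ∈ interior I, HasDerivAt f (f' x) x)
    (hP : ∀ x ∈ I, ∀ y ∈ I, ∀ t ∈ Set.Icc (0:ℝ) 1,
      |f' (t*x + (1-t)*y)| ≤ |f' x| + |f' y|) :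
    |(1/(b-a)) * ∫ x in a..b, f x - f ((a+b)/2)|
      ≤ ((b-a)/3) * ((1 + 2^(p+1))/(3*(p+1)))^(1/p) * (|f' a| + |f' b|) := by
  have hsub : Icc a b ⊆ interior I := hIc.interior.out ha hb
  have hbound : ∀ x ∈ Icc a b, |f' x| ≤ |f' a| + |f' b| := fun x hx =>
    le_add_of_mem_segment (g := fun x => |f' x|) hP (interior_subset ha) (interior_subset hb)
      (by rwa [segment_eq_Icc hab.le])
  have hmid : |∫ x in a..b, f x - f ((a + b) / 2)| ≤ (|f' a| + |f' b|) * ((b - a) ^ 2 / 4) := by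
    convert abs_integral_sub_le_of_abs_deriv_le hab.le
      (fun x hx => (hderiv x (hsub hx)).hasDerivWithinAt) hbound
      (c := (a + b) / 2) ⟨by linarith, by linarith⟩ using 2
    ring
  have hba : 0 < b - a := by linarith
  have hC := three_div_four_le_holder_const hp.le
  rw [abs_mul, abs_of_pos (one_div_pos.mpr hba)]
  calc 1 / (b - a) * |∫ x in a..b, f x - f ((a + b) / 2)|
      ≤ (b - a) / 3 * (3 / 4) * (|f' a| + |f' b|) := by
        rw [div_mul_eq_mul_div, one_mul, div_le_iff₀ hba]; linarith
    _ ≤ _ := by gcongr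

/-- Midpoint-type inequality for functions with `f(a) = f((a+b)/2) = f(b)` whose derivative
has absolute value a `P`-function (`h`-convex with `h ≡ 1`), via Hölder's inequality. -/
theorem simpson_Pfunction_holder
    (I : Set ℝ) (hI : I ⊆ Set.Ici (0:ℝ)) (hIc : I.OrdConnected)
    (f f' : ℝ → ℝ) (a b : ℝ)
    (ha : a ∈ interior I) (hb : b ∈ interior I) (hab : a < b)
    (p q : ℝ) (hp : 1 < p) (hq : 1 < q) (hpq : 1/p + 1/q = 1)
    (hderiv : ∀ x ∈ interior I, HasDerivAt f (f' x) x)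
    (hfint : IntervalIntegrable f' volume a b)
    (hfa : f a = f ((a+b)/2)) (hfb : f b = f ((a+b)/2))
    (hP : ∀ x ∈ I, ∀ y ∈ I, ∀ t ∈ Set.Icc (0:ℝ) 1,
      |f' (t*x + (1-t)*y)| ≤ |f' x| + |f' y|) :
    |(1/(b-a)) * ∫ x in a..b, f x - f ((a+b)/2)|
      ≤ ((b-a)/3) * ((1 + 2^(p+1))/(3*(p+1)))^(1/p) * (|f' a| + |f' b|) :=
  simpson_Pfunction_holder_general I hIc f f' a b ha hb hab p hp hderiv hP
end

section
/- Let f : I ⊂ [0,∞) → ℝ be differentiable on the interior of I with f′ ∈ L[a,b], where a, b are interior points of I with a < b, and let p, q > 1 with 1/p + 1/q = 1. If |f′| is convex on I, then |(1/(b−a)) ∫_a^b f(x) dx − (1/3)[(f(a)+f(b))/2 + 2 f((a+b)/2)]| ≤ ((b−a)/6) ((1 + 2^{p+1})/(3(p+1)))^{1/p} (1/(q+1))^{1/q} [ |f′(a)|/2 + |f′(b)| (2 − (1/2)^q)^{1/q} ]. -/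
/-!
Substituting `x = a + (b - a) t` reduces the claim to `[0, 1]`, where integration by parts writes
the Simpson error of `F` as `∫₀¹ κ G` with `G = F'` and the kernel `κ t = t - 1/6` on `[0, 1/2]`,
`κ t = t - 5/6` on `(1/2, 1]`. Since `|G|` is convex and `G`, being a derivative, has the
intermediate value property, `G` keeps one sign on all of `[0, 1]`, or else on each side of a zero
`z`. On such a piece `|G| ≤ w` for an affine `w ≥ 0` (the chord of `|G|`; or `(1 - t) |G 0|` left
of `z` and `t |G 1|` right of `z`), so the piece contributes at most
`max (∫₀¹ κ⁺ w) (∫₀¹ κ⁻ w) = 5/144 (w 0 + w 1)`. Altogether the error is at most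
`5/144 (b - a) (|f' a| + |f' b|)`, and the three Hölder-type factors on the right-hand side are at
least `5/6`, `1/2` and `1`.
-/

open MeasureTheory Set intervalIntegral

noncomputable def simpsonKernel (t : ℝ) : ℝ := if t ≤ 1/2 then t - 1/6 else t - 5/6

lemma simpsonKernel_of_le {t : ℝ} (ht : t ≤ 1/2) : simpsonKernel t = t - 1/6 := if_pos ht

lemma simpsonKernel_of_lt {t : ℝ} (ht : 1/2 < t) : simpsonKernel t = t - 5/6 := if_neg ht.not_ge

@[fun_prop]
lemma measurable_simpsonKernel : Measurable simpsonKernel :=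
  Measurable.ite measurableSet_Iic (measurable_id.sub_const _) (measurable_id.sub_const _)

lemma abs_simpsonKernel_le_one {t : ℝ} (ht : t ∈ Icc (0:ℝ) 1) : |simpsonKernel t| ≤ 1 := by
  unfold simpsonKernel
  split_ifs <;> rw [abs_le] <;> constructor <;> linarith [ht.1, ht.2]

lemma abs_posPart_le_abs (a : ℝ) : |a⁺| ≤ |a| := by
  rw [abs_of_nonneg (posPart_nonneg a)]
  exact max_le (le_abs_self a) (abs_nonneg a)

lemma abs_negPart_le_abs (a : ℝ) : |a⁻| ≤ |a| := by
  rw [abs_of_nonneg (negPart_nonneg a)]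
  exact max_le (neg_le_abs a) (abs_nonneg a)

theorem IntervalIntegrable.bdd_mul {k G : ℝ → ℝ} {x y C : ℝ}
    (hG : IntervalIntegrable G volume x y) (hk : Measurable k) (hkC : ∀ t ∈ uIcc x y, |k t| ≤ C) :
    IntervalIntegrable (fun t => k t * G t) volume x y := by
  rw [intervalIntegrable_iff] at hG ⊢
  exact hG.bdd_mul hk.aestronglyMeasurable
    ((ae_restrict_mem measurableSet_uIoc).mono fun t ht => hkC t (uIoc_subset_uIcc ht))

lemma integral_quadratic (c₀ c₁ c₂ u v : ℝ) :
    ∫ t in u..v, (c₀ + c₁ * t + c₂ * t ^ 2) =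
      (c₀ * v + c₁ * v ^ 2 / 2 + c₂ * v ^ 3 / 3) - (c₀ * u + c₁ * u ^ 2 / 2 + c₂ * u ^ 3 / 3) := by
  refine integral_eq_sub_of_hasDerivAt (f := fun t => c₀ * t + c₁ * t ^ 2 / 2 + c₂ * t ^ 3 / 3)
    (fun t _ => ?_) (Continuous.intervalIntegrable (by fun_prop) u v)
  have h : HasDerivAt (fun s => c₀ * s + c₁ * s ^ 2 / 2 + c₂ * s ^ 3 / 3)
      (c₀ * 1 + c₁ * (2 * t ^ 1) / 2 + c₂ * (3 * t ^ 2) / 3) t :=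
    (((hasDerivAt_id t).const_mul c₀).add (((hasDerivAt_pow 2 t).const_mul c₁).div_const 2)).add
      (((hasDerivAt_pow 3 t).const_mul c₂).div_const 3)
  exact h.congr_deriv (by ring)

lemma integral_eq_of_eqOn_quadratic {f : ℝ → ℝ} {u v : ℝ} (c₀ c₁ c₂ : ℝ) (huv : u ≤ v)
    (hf : EqOn f (fun t => c₀ + c₁ * t + c₂ * t ^ 2) (Ioo u v)) :
    ∫ t in u..v, f t =
      (c₀ * v + c₁ * v ^ 2 / 2 + c₂ * v ^ 3 / 3) - (c₀ * u + c₁ * u ^ 2 / 2 + c₂ * u ^ 3 / 3) := by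
  rw [integral_congr_Ioo_of_le huv hf, integral_quadratic]

lemma integral_zero_one_eq_sum_sixths {f : ℝ → ℝ} (hf : IntervalIntegrable f volume 0 1) :
    ∫ t in (0:ℝ)..1, f t = (∫ t in (0:ℝ)..1/6, f t) + (∫ t in (1/6:ℝ)..1/2, f t)
      + (∫ t in (1/2:ℝ)..5/6, f t) + ∫ t in (5/6:ℝ)..1, f t := by
  have hf' : ∀ {u v : ℝ}, u ∈ Icc (0:ℝ) 1 → v ∈ Icc (0:ℝ) 1 → IntervalIntegrable f volume u v :=
    fun hu hv => hf.mono_set (by rw [uIcc_of_le zero_le_one]; exact uIcc_subset_Icc hu hv)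
  have h0 : (0:ℝ) ∈ Icc (0:ℝ) 1 := by norm_num
  have h1 : (1/6:ℝ) ∈ Icc (0:ℝ) 1 := by norm_num
  have h2 : (1/2:ℝ) ∈ Icc (0:ℝ) 1 := by norm_num
  have h3 : (5/6:ℝ) ∈ Icc (0:ℝ) 1 := by norm_num
  have h4 : (1:ℝ) ∈ Icc (0:ℝ) 1 := by norm_num
  rw [integral_add_adjacent_intervals (hf' h0 h1) (hf' h1 h2),
    integral_add_adjacent_intervals (hf' h0 h2) (hf' h2 h3),
    integral_add_adjacent_intervals (hf' h0 h3) (hf' h3 h4)]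

lemma integral_posPart_simpsonKernel_mul_affine (A B : ℝ) :
    ∫ t in (0:ℝ)..1, (simpsonKernel t)⁺ * ((1 - t) * A + t * B) = 5/144 * (A + B) := by
  rw [integral_zero_one_eq_sum_sixths ((Continuous.intervalIntegrable (by fun_prop) 0 1).bdd_mul
      (by fun_prop) fun t ht => (abs_posPart_le_abs _).trans
        (abs_simpsonKernel_le_one (uIcc_of_le (zero_le_one' ℝ) ▸ ht))),
    integral_eq_of_eqOn_quadratic 0 0 0 (by norm_num) fun t ht => by
      simp only
      rw [simpsonKernel_of_le (by linarith [ht.2]), posPart_of_nonpos (by linarith [ht.2])]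
      ring,
    integral_eq_of_eqOn_quadratic (-A/6) (7*A/6 - B/6) (B - A) (by norm_num) fun t ht => by
      simp only
      rw [simpsonKernel_of_le ht.2.le, posPart_of_nonneg (by linarith [ht.1])]
      ring,
    integral_eq_of_eqOn_quadratic 0 0 0 (by norm_num) fun t ht => by
      simp only
      rw [simpsonKernel_of_lt ht.1, posPart_of_nonpos (by linarith [ht.2])]
      ring,
    integral_eq_of_eqOn_quadratic (-5*A/6) (11*A/6 - 5*B/6) (B - A) (by norm_num) fun t ht => by
      simp only
      rw [simpsonKernel_of_lt (by linarith [ht.1]), posPart_of_nonneg (by linarith [ht.1])]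
      ring]
  ring

lemma integral_negPart_simpsonKernel_mul_affine (A B : ℝ) :
    ∫ t in (0:ℝ)..1, (simpsonKernel t)⁻ * ((1 - t) * A + t * B) = 5/144 * (A + B) := by
  rw [integral_zero_one_eq_sum_sixths ((Continuous.intervalIntegrable (by fun_prop) 0 1).bdd_mul
      (by fun_prop) fun t ht => (abs_negPart_le_abs _).trans
        (abs_simpsonKernel_le_one (uIcc_of_le (zero_le_one' ℝ) ▸ ht))),
    integral_eq_of_eqOn_quadratic (A/6) (B/6 - 7*A/6) (A - B) (by norm_num) fun t ht => by
      simp only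
      rw [simpsonKernel_of_le (by linarith [ht.2]), negPart_of_nonpos (by linarith [ht.2])]
      ring,
    integral_eq_of_eqOn_quadratic 0 0 0 (by norm_num) fun t ht => by
      simp only
      rw [simpsonKernel_of_le ht.2.le, negPart_of_nonneg (by linarith [ht.1])]
      ring,
    integral_eq_of_eqOn_quadratic (5*A/6) (5*B/6 - 11*A/6) (A - B) (by norm_num) fun t ht => by
      simp only
      rw [simpsonKernel_of_lt ht.1, negPart_of_nonpos (by linarith [ht.2])]
      ring,
    integral_eq_of_eqOn_quadratic 0 0 0 (by norm_num) fun t ht => by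
      simp only
      rw [simpsonKernel_of_lt (by linarith [ht.1]), negPart_of_nonneg (by linarith [ht.1])]
      ring]
  ring

theorem integral_simpsonKernel_mul_deriv {F G : ℝ → ℝ}
    (hFG : ∀ t ∈ Icc (0:ℝ) 1, HasDerivAt F (G t) t) (hG : IntervalIntegrable G volume 0 1) :
    ∫ t in (0:ℝ)..1, simpsonKernel t * G t
      = (F 0 + 4 * F (1/2) + F 1) / 6 - ∫ t in (0:ℝ)..1, F t := by
  have hG' : ∀ {u v : ℝ}, u ∈ Icc (0:ℝ) 1 → v ∈ Icc (0:ℝ) 1 → IntervalIntegrable G volume u v :=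
    fun hu hv => hG.mono_set (by rw [uIcc_of_le zero_le_one]; exact uIcc_subset_Icc hu hv)
  have hF : ∀ {u v : ℝ}, u ∈ Icc (0:ℝ) 1 → v ∈ Icc (0:ℝ) 1 → IntervalIntegrable F volume u v :=
    fun hu hv => ContinuousOn.intervalIntegrable fun t ht =>
      (hFG t (uIcc_subset_Icc hu hv ht)).continuousAt.continuousWithinAt
  have hkG : ∀ {u v : ℝ}, u ∈ Icc (0:ℝ) 1 → v ∈ Icc (0:ℝ) 1 →
      IntervalIntegrable (fun t => simpsonKernel t * G t) volume u v :=
    fun hu hv => (hG' hu hv).bdd_mul measurable_simpsonKernel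
      fun t ht => abs_simpsonKernel_le_one (uIcc_subset_Icc hu hv ht)
  have h0 : (0:ℝ) ∈ Icc (0:ℝ) 1 := by norm_num
  have hm : (1/2:ℝ) ∈ Icc (0:ℝ) 1 := by norm_num
  have h1 : (1:ℝ) ∈ Icc (0:ℝ) 1 := by norm_num
  have left : ∫ t in (0:ℝ)..1/2, F t * 1
      = F (1/2) * (1/2 - 1/6) - F 0 * (0 - 1/6) - ∫ t in (0:ℝ)..1/2, simpsonKernel t * G t := by
    rw [integral_mul_deriv_eq_deriv_mul (v := fun t => t - 1/6)
      (fun t ht => hFG t (uIcc_subset_Icc h0 hm ht)) (fun t _ => (hasDerivAt_id t).sub_const _)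
      (hG' h0 hm) intervalIntegrable_const]
    congr 1
    refine integral_congr fun t ht => ?_
    rw [uIcc_of_le (by norm_num)] at ht
    simp only [simpsonKernel_of_le ht.2, mul_comm]
  have right : ∫ t in (1/2:ℝ)..1, F t * 1
      = F 1 * (1 - 5/6) - F (1/2) * (1/2 - 5/6) - ∫ t in (1/2:ℝ)..1, simpsonKernel t * G t := by
    rw [integral_mul_deriv_eq_deriv_mul (v := fun t => t - 5/6)
      (fun t ht => hFG t (uIcc_subset_Icc hm h1 ht)) (fun t _ => (hasDerivAt_id t).sub_const _)
      (hG' hm h1) intervalIntegrable_const]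
    congr 1
    refine integral_congr_Ioo_of_le (by norm_num) fun t ht => ?_
    simp only [simpsonKernel_of_lt ht.1, mul_comm]
  simp only [mul_one] at left right
  rw [← integral_add_adjacent_intervals (hkG h0 hm) (hkG hm h1),
    ← integral_add_adjacent_intervals (hF h0 hm) (hF hm h1)]
  linarith

lemma ConvexOn.le_one_sub_mul_of_eq_zero {g : ℝ → ℝ} (hg : ConvexOn ℝ (Icc 0 1) g) {z t : ℝ}
    (hz : z ∈ Icc (0:ℝ) 1) (hgz : g z = 0) (hg0 : 0 ≤ g 0) (ht : t ∈ Icc 0 z) :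
    g t ≤ (1 - t) * g 0 := by
  rcases ht.1.eq_or_lt with rfl | ht0
  · simp
  rcases ht.2.eq_or_lt with rfl | htz
  · rw [hgz]; exact mul_nonneg (by linarith [hz.2]) hg0
  have h := hg.secant_mono_aux1 (left_mem_Icc.2 zero_le_one) hz ht0 htz
  rw [hgz] at h
  nlinarith [mul_nonneg (mul_nonneg ht0.le hg0) (sub_nonneg.2 hz.2)]

lemma ConvexOn.le_mul_of_eq_zero {g : ℝ → ℝ} (hg : ConvexOn ℝ (Icc 0 1) g) {z t : ℝ}
    (hz : z ∈ Icc (0:ℝ) 1) (hgz : g z = 0) (hg1 : 0 ≤ g 1) (ht : t ∈ Icc z 1) :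
    g t ≤ t * g 1 := by
  rcases ht.2.eq_or_lt with rfl | ht1
  · simp
  rcases ht.1.eq_or_lt with rfl | hzt
  · rw [hgz]; exact mul_nonneg hz.1 hg1
  have h := hg.secant_mono_aux1 hz (right_mem_Icc.2 zero_le_one) hzt ht1
  rw [hgz] at h
  nlinarith [mul_nonneg (mul_nonneg hz.1 (sub_nonneg.2 ht1.le)) hg1]

theorem forall_nonneg_or_forall_nonpos_of_convexOn_abs {F G : ℝ → ℝ} {x y e : ℝ}
    (hFG : ∀ t ∈ Icc x y, HasDerivAt F (G t) t) (hG : ConvexOn ℝ (Icc x y) fun t => |G t|)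
    (he : e = x ∨ e = y) (hGe : G e = 0) :
    (∀ t ∈ Icc x y, 0 ≤ G t) ∨ ∀ t ∈ Icc x y, G t ≤ 0 := by
  by_contra! h
  obtain ⟨⟨u, hu, hGu⟩, ⟨v, hv, hGv⟩⟩ := h
  have hsub : uIcc u v ⊆ Icc x y := uIcc_subset_Icc hu hv
  obtain ⟨w, hw, hGw⟩ : ∃ w ∈ uIcc u v, G w = 0 :=
    ordConnected_uIcc.image_hasDerivWithinAt (fun t ht => (hFG t (hsub ht)).hasDerivWithinAt)
      |>.out (mem_image_of_mem G left_mem_uIcc) (mem_image_of_mem G right_mem_uIcc) ⟨hGu.le, hGv.le⟩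
  have heI : e ∈ Icc x y := by
    rcases he with rfl | rfl
    · exact left_mem_Icc.2 (hu.1.trans hu.2)
    · exact right_mem_Icc.2 (hu.1.trans hu.2)
  have hzero : ∀ t ∈ uIcc w e, G t = 0 := fun t ht => by
    have := hG.le_on_segment (hsub hw) heI (segment_eq_uIcc w e ▸ ht)
    simpa [hGw, hGe] using this
  have : u ∈ uIcc w e ∨ v ∈ uIcc w e := by
    simp only [mem_uIcc, mem_Icc] at *
    rcases he with rfl | rfl <;> grind
  rcases this with h | h
  · linarith [hzero u h]
  · linarith [hzero v h]

theorem integral_mul_le_integral_posPart_mul {k u w : ℝ → ℝ} {x y C : ℝ}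
    (hx : 0 ≤ x) (hxy : x ≤ y) (hy : y ≤ 1) (hk : Measurable k) (hkC : ∀ t ∈ Icc (0:ℝ) 1, |k t| ≤ C)
    (hu : IntervalIntegrable u volume x y) (hw : Continuous w) (hw0 : ∀ t ∈ Icc (0:ℝ) 1, 0 ≤ w t)
    (huw : ∀ t ∈ Icc x y, 0 ≤ u t ∧ u t ≤ w t) :
    ∫ t in x..y, k t * u t ≤ ∫ t in (0:ℝ)..1, (k t)⁺ * w t := by
  have hsub : uIcc x y ⊆ uIcc 0 1 := by
    rw [uIcc_of_le hxy, uIcc_of_le zero_le_one]; exact Icc_subset_Icc hx hy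
  have hkw : IntervalIntegrable (fun t => (k t)⁺ * w t) volume 0 1 :=
    (hw.intervalIntegrable 0 1).bdd_mul (by fun_prop) fun t ht =>
      (abs_posPart_le_abs _).trans (hkC t (by rwa [uIcc_of_le zero_le_one] at ht))
  calc ∫ t in x..y, k t * u t
      ≤ ∫ t in x..y, (k t)⁺ * w t := by
        refine integral_mono_on hxy (hu.bdd_mul hk fun t ht => hkC t ?_) (hkw.mono_set hsub)
          fun t ht => ?_
        · simpa [uIcc_of_le zero_le_one] using hsub ht
        · nlinarith [le_posPart (k t), posPart_nonneg (k t), huw t ht]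
    _ ≤ ∫ t in (0:ℝ)..1, (k t)⁺ * w t :=
        integral_mono_interval hx hxy hy ((ae_restrict_mem measurableSet_Ioc).mono fun t ht =>
          mul_nonneg (posPart_nonneg _) (hw0 t (Ioc_subset_Icc_self ht))) hkw

theorem abs_integral_mul_le_max {k u w : ℝ → ℝ} {x y C : ℝ}
    (hx : 0 ≤ x) (hxy : x ≤ y) (hy : y ≤ 1) (hk : Measurable k) (hkC : ∀ t ∈ Icc (0:ℝ) 1, |k t| ≤ C)
    (hu : IntervalIntegrable u volume x y) (hw : Continuous w) (hw0 : ∀ t ∈ Icc (0:ℝ) 1, 0 ≤ w t)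
    (huw : ∀ t ∈ Icc x y, 0 ≤ u t ∧ u t ≤ w t) :
    |∫ t in x..y, k t * u t| ≤
      max (∫ t in (0:ℝ)..1, (k t)⁺ * w t) (∫ t in (0:ℝ)..1, (k t)⁻ * w t) := by
  have hpos := integral_mul_le_integral_posPart_mul hx hxy hy hk hkC hu hw hw0 huw
  have hneg := integral_mul_le_integral_posPart_mul hx hxy hy hk.neg
    (fun t ht => (abs_neg (k t)).trans_le (hkC t ht)) hu hw hw0 huw
  simp only [Pi.neg_apply, posPart_neg, neg_mul, intervalIntegral.integral_neg] at hneg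
  exact abs_le.2 ⟨neg_le.1 (hneg.trans (le_max_right _ _)), hpos.trans (le_max_left _ _)⟩

theorem abs_integral_simpsonKernel_mul_le_of_abs_le_affine {G : ℝ → ℝ} {x y A B : ℝ}
    (hx : 0 ≤ x) (hxy : x ≤ y) (hy : y ≤ 1) (hA : 0 ≤ A) (hB : 0 ≤ B)
    (hG : IntervalIntegrable G volume x y)
    (hsign : (∀ t ∈ Icc x y, 0 ≤ G t) ∨ ∀ t ∈ Icc x y, G t ≤ 0)
    (hGw : ∀ t ∈ Icc x y, |G t| ≤ (1 - t) * A + t * B) :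
    |∫ t in x..y, simpsonKernel t * G t| ≤ 5/144 * (A + B) := by
  have hw0 : ∀ t ∈ Icc (0:ℝ) 1, 0 ≤ (1 - t) * A + t * B := fun t ht =>
    add_nonneg (mul_nonneg (sub_nonneg.2 ht.2) hA) (mul_nonneg ht.1 hB)
  have bound := fun {u : ℝ → ℝ} (hu : IntervalIntegrable u volume x y) huw =>
    abs_integral_mul_le_max hx hxy hy measurable_simpsonKernel (fun t => abs_simpsonKernel_le_one)
      hu (by fun_prop : Continuous fun t : ℝ => (1 - t) * A + t * B) hw0 huw
  rw [integral_posPart_simpsonKernel_mul_affine, integral_negPart_simpsonKernel_mul_affine,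
    max_self] at bound
  rcases hsign with hpos | hneg
  · exact bound hG fun t ht => ⟨hpos t ht, (le_abs_self _).trans (hGw t ht)⟩
  · have := bound hG.neg fun t ht => ⟨neg_nonneg.2 (hneg t ht), (neg_le_abs _).trans (hGw t ht)⟩
    simpa only [Pi.neg_apply, mul_neg, intervalIntegral.integral_neg, abs_neg] using this

theorem abs_integral_simpsonKernel_mul_le {F G : ℝ → ℝ}
    (hFG : ∀ t ∈ Icc (0:ℝ) 1, HasDerivAt F (G t) t) (hG : IntervalIntegrable G volume 0 1)
    (hconv : ConvexOn ℝ (Icc 0 1) fun t => |G t|) :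
    |∫ t in (0:ℝ)..1, simpsonKernel t * G t| ≤ 5/144 * (|G 0| + |G 1|) := by
  have hG' : ∀ {x y : ℝ}, 0 ≤ x → x ≤ y → y ≤ 1 → IntervalIntegrable G volume x y :=
    fun hx hxy hy => hG.mono_set (by
      rw [uIcc_of_le hxy, uIcc_of_le zero_le_one]; exact Icc_subset_Icc hx hy)
  by_cases hzero : ∃ z ∈ Icc (0:ℝ) 1, G z = 0
  · obtain ⟨z, hz, hGz⟩ := hzero
    have hsign : ∀ {x y : ℝ}, 0 ≤ x → x ≤ y → y ≤ 1 → (z = x ∨ z = y) →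
        (∀ t ∈ Icc x y, 0 ≤ G t) ∨ ∀ t ∈ Icc x y, G t ≤ 0 := fun hx _ hy he =>
      forall_nonneg_or_forall_nonpos_of_convexOn_abs
        (fun t ht => hFG t (Icc_subset_Icc hx hy ht))
        (hconv.subset (Icc_subset_Icc hx hy) (convex_Icc _ _)) he hGz
    have hgz : |G z| = 0 := by rw [hGz, abs_zero]
    have left : |∫ t in (0:ℝ)..z, simpsonKernel t * G t| ≤ 5/144 * (|G 0| + 0) :=
      abs_integral_simpsonKernel_mul_le_of_abs_le_affine le_rfl hz.1 hz.2 (abs_nonneg _) le_rfl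
        (hG' le_rfl hz.1 hz.2) (hsign le_rfl hz.1 hz.2 (Or.inr rfl)) fun t ht => by
          simpa using hconv.le_one_sub_mul_of_eq_zero hz hgz (abs_nonneg _) ht
    have right : |∫ t in z..1, simpsonKernel t * G t| ≤ 5/144 * (0 + |G 1|) :=
      abs_integral_simpsonKernel_mul_le_of_abs_le_affine hz.1 hz.2 le_rfl le_rfl (abs_nonneg _)
        (hG' hz.1 hz.2 le_rfl) (hsign hz.1 hz.2 le_rfl (Or.inl rfl)) fun t ht => by
          simpa using hconv.le_mul_of_eq_zero hz hgz (abs_nonneg _) ht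
    have hkG : ∀ {x y : ℝ}, 0 ≤ x → x ≤ y → y ≤ 1 →
        IntervalIntegrable (fun t => simpsonKernel t * G t) volume x y := fun hx hxy hy =>
      (hG' hx hxy hy).bdd_mul measurable_simpsonKernel fun t ht =>
        abs_simpsonKernel_le_one (Icc_subset_Icc hx hy (by rwa [uIcc_of_le hxy] at ht))
    rw [← integral_add_adjacent_intervals (hkG le_rfl hz.1 hz.2) (hkG hz.1 hz.2 le_rfl)]
    linarith [abs_add_le (∫ t in (0:ℝ)..z, simpsonKernel t * G t)
      (∫ t in z..1, simpsonKernel t * G t)]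
  · push Not at hzero
    have hsign := hasDerivWithinAt_forall_lt_or_forall_gt_of_forall_ne (convex_Icc 0 1)
      (fun t ht => (hFG t ht).hasDerivWithinAt) hzero
    refine abs_integral_simpsonKernel_mul_le_of_abs_le_affine le_rfl zero_le_one le_rfl
      (abs_nonneg _) (abs_nonneg _) hG ?_ fun t ht => ?_
    · exact hsign.symm.imp (fun h t ht => (h t ht).le) fun h t ht => (h t ht).le
    · have := hconv.2 (left_mem_Icc.2 zero_le_one) (right_mem_Icc.2 zero_le_one)
        (sub_nonneg.2 ht.2) ht.1 (sub_add_cancel 1 t)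
      simpa using this

lemma five_div_six_le_rpow {p : ℝ} (hp : 1 ≤ p) :
    (5/6 : ℝ) ≤ ((1 + 2 ^ (p + 1)) / (3 * (p + 1))) ^ (1 / p) := by
  have hexp : 4 * (1 + Real.log 2 * (p - 1)) ≤ (2:ℝ) ^ (p + 1) := by
    rw [show p + 1 = 2 + (p - 1) by ring, Real.rpow_add two_pos,
      Real.rpow_def_of_pos two_pos (p - 1)]
    norm_num
    linarith [Real.add_one_le_exp (Real.log 2 * (p - 1))]
  have hbase : (5/6 : ℝ) ≤ (1 + 2 ^ (p + 1)) / (3 * (p + 1)) := by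
    rw [le_div_iff₀ (by linarith)]
    nlinarith [Real.log_two_gt_d9]
  calc (5/6 : ℝ) ≤ (5/6) ^ (1 / p) :=
        Real.self_le_rpow_of_le_one (by norm_num) (by norm_num) (div_le_one_of_le₀ hp (by linarith))
    _ ≤ _ := Real.rpow_le_rpow (by norm_num) hbase (by positivity)

lemma half_le_one_div_add_one_rpow {q : ℝ} (hq : 1 ≤ q) : (1/2 : ℝ) ≤ (1 / (q + 1)) ^ (1 / q) := by
  have hbern : q + 1 ≤ (2:ℝ) ^ q := by
    have := one_add_mul_self_le_rpow_one_add (by norm_num : (-1:ℝ) ≤ 1) hq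
    norm_num at this
    linarith
  calc (1/2 : ℝ) = (((2:ℝ) ^ q)⁻¹) ^ (1 / q) := by
        rw [Real.inv_rpow (by positivity), one_div q,
          Real.rpow_rpow_inv (by norm_num) (by positivity), one_div]
    _ ≤ _ := Real.rpow_le_rpow (by positivity)
        (by rw [one_div]; exact inv_anti₀ (by positivity) hbern) (by positivity)

lemma one_le_two_sub_half_rpow_rpow {q : ℝ} (hq : 0 ≤ q) : 1 ≤ (2 - (1/2 : ℝ) ^ q) ^ (1 / q) :=
  Real.one_le_rpow (by linarith [Real.rpow_le_one (by norm_num : (0:ℝ) ≤ 1/2) (by norm_num) hq])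
    (by positivity)

theorem abs_simpson_error_le_of_convexOn_abs_deriv {f f' : ℝ → ℝ} {a b : ℝ} (hab : a < b)
    (hf : ∀ x ∈ Icc a b, HasDerivAt f (f' x) x) (hf' : IntervalIntegrable f' volume a b)
    (hconv : ConvexOn ℝ (Icc a b) fun x => |f' x|) :
    |(1 / (b - a)) * (∫ x in a..b, f x) - (1/3) * ((f a + f b) / 2 + 2 * f ((a + b) / 2))|
      ≤ 5/144 * (b - a) * (|f' a| + |f' b|) := by
  have hba : 0 < b - a := sub_pos.2 hab
  have hmaps : ∀ t ∈ Icc (0:ℝ) 1, (b - a) * t + a ∈ Icc a b := fun t ht =>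
    ⟨by nlinarith [ht.1], by nlinarith [ht.2]⟩
  have hFG : ∀ t ∈ Icc (0:ℝ) 1,
      HasDerivAt (fun t => f ((b - a) * t + a)) ((b - a) * f' ((b - a) * t + a)) t := fun t ht =>
    ((hf _ (hmaps t ht)).comp t (((hasDerivAt_id t).const_mul (b - a)).add_const a)).congr_deriv
      (by ring)
  have hG : IntervalIntegrable (fun t => (b - a) * f' ((b - a) * t + a)) volume 0 1 := by
    have h := (hf'.comp_add_right a).comp_mul_left (c := b - a)
    rw [sub_self, zero_div, div_self hba.ne'] at h
    exact h.const_mul (b - a)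
  have hconvG : ConvexOn ℝ (Icc 0 1) fun t => |(b - a) * f' ((b - a) * t + a)| := by
    refine (((hconv.comp_affineMap (AffineMap.lineMap a b)).subset (fun t ht => ?_)
      (convex_Icc 0 1)).smul hba.le).congr fun t _ => ?_
    · simpa [AffineMap.lineMap_apply_ring', mul_comm] using hmaps t ht
    · simp [AffineMap.lineMap_apply_ring', abs_mul, abs_of_pos hba, mul_comm]
  have hint : ∫ t in (0:ℝ)..1, f ((b - a) * t + a) = (1 / (b - a)) * ∫ x in a..b, f x := by
    rw [integral_comp_mul_add _ hba.ne', mul_zero, zero_add, mul_one, sub_add_cancel, smul_eq_mul,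
      one_div]
  have key := abs_integral_simpsonKernel_mul_le hFG hG hconvG
  rw [integral_simpsonKernel_mul_deriv hFG hG, hint, abs_sub_comm, show (b - a) * 0 + a = a by ring,
    show (b - a) * 1 + a = b by ring, show (b - a) * (1/2) + a = (a + b) / 2 by ring, abs_mul,
    abs_mul, abs_of_pos hba] at key
  refine (congrArg abs ?_).trans_le (key.trans_eq (by ring))
  ring

theorem simpson_convex_holder_general
    (I : Set ℝ) (hIc : I.OrdConnected)
    (f f' : ℝ → ℝ) (a b : ℝ)
    (ha : a ∈ interior I) (hb : b ∈ interior I) (hab : a < b)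
    (p q : ℝ) (hp : 1 < p) (hq : 1 < q)
    (hderiv : ∀ x ∈ interior I, HasDerivAt f (f' x) x)
    (hfint : IntervalIntegrable f' volume a b)
    (hconv : ∀ x ∈ I, ∀ y ∈ I, ∀ t ∈ Set.Icc (0:ℝ) 1,
      |f' (t*x + (1-t)*y)| ≤ t * |f' x| + (1-t) * |f' y|) :
    |(1/(b-a)) * ∫ x in a..b, f x
        - (1/3) * ((f a + f b)/2 + 2 * f ((a+b)/2))|
      ≤ ((b-a)/6) * ((1 + 2^(p+1))/(3*(p+1)))^(1/p) * (1/(q+1))^(1/q) *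
        (|f' a|/2 + |f' b| * (2 - (1/2)^q)^(1/q)) := by
  have hsub : Icc a b ⊆ interior I := hIc.interior.out ha hb
  have hconv' : ConvexOn ℝ (Icc a b) fun x => |f' x| := by
    refine ⟨convex_Icc a b, fun x hx y hy s t hs ht hst => ?_⟩
    obtain rfl : t = 1 - s := by linarith
    simpa using
      hconv x (interior_subset (hsub hx)) y (interior_subset (hsub hy)) s ⟨hs, by linarith⟩
  have hfi : IntervalIntegrable f volume a b := ContinuousOn.intervalIntegrable fun x hx =>
    (hderiv x (hsub (uIcc_of_le hab.le ▸ hx))).continuousAt.continuousWithinAt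
  -- the integral in the statement extends over the (constant) Simpson sum
  rw [integral_sub hfi intervalIntegrable_const, intervalIntegral.integral_const, smul_eq_mul,
    mul_sub, ← mul_assoc, one_div_mul_cancel (sub_pos.2 hab).ne', one_mul]
  calc _ ≤ 5/144 * (b - a) * (|f' a| + |f' b|) :=
        abs_simpson_error_le_of_convexOn_abs_deriv hab (fun x hx => hderiv x (hsub hx)) hfint hconv'
    _ ≤ (b - a) / 6 * (5/6) * (1/2) * (|f' a| / 2 + |f' b| * 1) := by
        nlinarith [mul_nonneg (sub_pos.2 hab).le (abs_nonneg (f' b))]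
    _ ≤ _ := by
        gcongr
        · exact five_div_six_le_rpow hp.le
        · exact half_le_one_div_add_one_rpow hq.le
        · exact one_le_two_sub_half_rpow_rpow (by linarith)

/-- Simpson-type inequality for functions whose derivative has convex absolute value
(the case `h(t) = t`), via Hölder's inequality with conjugate exponents `p, q`. -/
theorem simpson_convex_holder
    (I : Set ℝ) (hI : I ⊆ Set.Ici (0:ℝ)) (hIc : I.OrdConnected)
    (f f' : ℝ → ℝ) (a b : ℝ)
    (ha : a ∈ interior I) (hb : b ∈ interior I) (hab : a < b)
    (p q : ℝ) (hp : 1 < p) (hq : 1 < q) (hpq : 1/p + 1/q = 1)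
    (hderiv : ∀ x ∈ interior I, HasDerivAt f (f' x) x)
    (hfint : IntervalIntegrable f' volume a b)
    (hconv : ∀ x ∈ I, ∀ y ∈ I, ∀ t ∈ Set.Icc (0:ℝ) 1,
      |f' (t*x + (1-t)*y)| ≤ t * |f' x| + (1-t) * |f' y|) :
    |(1/(b-a)) * ∫ x in a..b, f x
        - (1/3) * ((f a + f b)/2 + 2 * f ((a+b)/2))|
      ≤ ((b-a)/6) * ((1 + 2^(p+1))/(3*(p+1)))^(1/p) * (1/(q+1))^(1/q) *
        (|f' a|/2 + |f' b| * (2 - (1/2)^q)^(1/q)) :=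
  simpson_convex_holder_general I hIc f f' a b ha hb hab p q hp hq hderiv hfint hconv
end

section
/- Let f : I ⊂ [0,∞) → ℝ be differentiable on the interior of I with f′ ∈ L[a,b], where a, b are interior points of I with a < b, and suppose f(a) = f((a+b)/2) = f(b). If |f′| is a P-function on I, then |(1/(b−a)) ∫_a^b f(x) dx − f((a+b)/2)| ≤ (b−a) [ |f′(a)| + |f′(b)| ]. -/
/-!
A `P`-function is bounded on `[a, b]` by the sum of its values at the endpoints, so `|f'| ≤ |f' a| + |f' b|`
there. The mean value inequality then gives `|f x - f ((a+b)/2)| ≤ (b - a) (|f' a| + |f' b|)` on `[a, b]`,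
and averaging this over `[a, b]` gives the claim.
-/

open MeasureTheory Set

theorem le_add_of_mem_Icc_of_le_add {g : ℝ → ℝ} {a b s : ℝ}
    (hg : ∀ t ∈ Icc (0:ℝ) 1, g (t * a + (1 - t) * b) ≤ g a + g b) (hs : s ∈ Icc a b) :
    g s ≤ g a + g b := by
  obtain ⟨t, u, ht, hu, htu, rfl⟩ := (Convex.mem_Icc (hs.1.trans hs.2)).1 hs
  obtain rfl : u = 1 - t := by linarith
  exact hg t ⟨ht, by linarith⟩

theorem abs_one_div_mul_intervalIntegral_le {g : ℝ → ℝ} {a b C : ℝ} (hab : a < b)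
    (hg : ∀ x ∈ Icc a b, |g x| ≤ C) :
    |(1 / (b - a)) * ∫ x in a..b, g x| ≤ C := by
  have hba : 0 < b - a := sub_pos.2 hab
  have hint : |∫ x in a..b, g x| ≤ C * (b - a) := by
    simpa [abs_of_pos hba] using intervalIntegral.norm_integral_le_of_norm_le_const
      fun x hx ↦ (Real.norm_eq_abs (g x)).trans_le
        (hg x (Ioc_subset_Icc_self (uIoc_of_le hab.le ▸ hx)))
  rw [abs_mul, abs_of_pos (one_div_pos.2 hba), one_div_mul_eq_div, div_le_iff₀ hba]
  exact hint

theorem simpson_Pfunction_general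
    (I : Set ℝ) (hIc : I.OrdConnected)
    (f f' : ℝ → ℝ) (a b : ℝ)
    (ha : a ∈ interior I) (hb : b ∈ interior I) (hab : a < b)
    (hderiv : ∀ x ∈ interior I, HasDerivAt f (f' x) x)
    (hP : ∀ x ∈ I, ∀ y ∈ I, ∀ t ∈ Set.Icc (0:ℝ) 1,
      |f' (t*x + (1-t)*y)| ≤ |f' x| + |f' y|) :
    |(1/(b-a)) * ∫ x in a..b, f x - f ((a+b)/2)|
      ≤ (b-a) * (|f' a| + |f' b|) := by
  have hsub : Icc a b ⊆ interior I := hIc.interior.out ha hb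
  have hmid : (a + b) / 2 ∈ Icc a b := ⟨by linarith, by linarith⟩
  have hf'_le : ∀ s ∈ Icc a b, ‖f' s‖ ≤ |f' a| + |f' b| := fun s hs ↦
    le_add_of_mem_Icc_of_le_add (g := fun x ↦ |f' x|)
      (hP a (interior_subset ha) b (interior_subset hb)) hs
  refine abs_one_div_mul_intervalIntegral_le hab fun x hx ↦ ?_
  calc |f x - f ((a + b) / 2)|
      ≤ (|f' a| + |f' b|) * |x - (a + b) / 2| :=
        (convex_Icc a b).norm_image_sub_le_of_norm_hasDerivWithin_le
          (fun s hs ↦ (hderiv s (hsub hs)).hasDerivWithinAt) hf'_le hmid hx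
    _ ≤ (|f' a| + |f' b|) * (b - a) := by
        gcongr
        exact abs_sub_le_iff.2 ⟨by linarith [hx.2, hmid.1], by linarith [hx.1, hmid.2]⟩
    _ = (b - a) * (|f' a| + |f' b|) := mul_comm _ _

/-- Midpoint-type inequality for functions with `f(a) = f((a+b)/2) = f(b)` whose derivative
has absolute value a `P`-function (`h`-convex with `h ≡ 1`). -/
theorem simpson_Pfunction
    (I : Set ℝ) (hI : I ⊆ Set.Ici (0:ℝ)) (hIc : I.OrdConnected)
    (f f' : ℝ → ℝ) (a b : ℝ)
    (ha : a ∈ interior I) (hb : b ∈ interior I) (hab : a < b)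
    (hderiv : ∀ x ∈ interior I, HasDerivAt f (f' x) x)
    (hfint : IntervalIntegrable f' volume a b)
    (hfa : f a = f ((a+b)/2)) (hfb : f b = f ((a+b)/2))
    (hP : ∀ x ∈ I, ∀ y ∈ I, ∀ t ∈ Set.Icc (0:ℝ) 1,
      |f' (t*x + (1-t)*y)| ≤ |f' x| + |f' y|) :
    |(1/(b-a)) * ∫ x in a..b, f x - f ((a+b)/2)|
      ≤ (b-a) * (|f' a| + |f' b|) :=
  simpson_Pfunction_general I hIc f f' a b ha hb hab hderiv hP
end

section
/- Let f : I ⊂ ℝ → ℝ be a differentiable mapping on the interior of I with f′ ∈ L¹[a,b], where a, b ∈ I with a < b. If |f′| is convex on [a,b], then |(1/6)[f(a) + 4 f((a+b)/2) + f(b)] − (1/(b−a)) ∫_a^b f(x) dx| ≤ (5(b−a)/72) [ |f′(a)| + |f′(b)| ]. -/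
/-! Integrating by parts against the Peano kernel of Simpson's rule, which is `x - (5a+b)/6` on
`[a, (a+b)/2]` and `x - (a+5b)/6` on `[(a+b)/2, b]`, writes the Simpson error as
`(1/(b-a)) ∫ K f'`. Convexity bounds `|f'|` by its chord through the endpoints, and integrating
`|K|` against that chord gives exactly `5(b-a)²/72 · (|f'(a)| + |f'(b)|)`. -/

open MeasureTheory Set intervalIntegral

theorem integral_sub_mul_deriv_eq {f f' : ℝ → ℝ} {u v : ℝ} (c : ℝ) (huv : u ≤ v)
    (hf : ContinuousOn f (Icc u v)) (hderiv : ∀ x ∈ Ioo u v, HasDerivAt f (f' x) x)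
    (hf' : IntervalIntegrable f' volume u v) :
    ∫ x in u..v, (x - c) * f' x = (v - c) * f v - (u - c) * f u - ∫ x in u..v, f x := by
  have hparts := integral_mul_deriv_eq_deriv_mul_of_hasDerivAt (v := fun x => x - c) (v' := 1)
    (by rwa [uIcc_of_le huv]) (continuous_sub_right c).continuousOn
    (by simpa only [min_eq_left huv, max_eq_right huv] using hderiv)
    (fun x _ => (hasDerivAt_id x).sub_const c) hf' intervalIntegrable_const
  simp only [Pi.one_apply, mul_one] at hparts
  simp only [mul_comm (_ - c)]
  linarith

theorem simpson_sub_average_eq {f f' : ℝ → ℝ} {a b : ℝ} (hab : a < b)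
    (hf : ContinuousOn f (Icc a b)) (hderiv : ∀ x ∈ Ioo a b, HasDerivAt f (f' x) x)
    (hf' : IntervalIntegrable f' volume a b) :
    (1/6) * (f a + 4 * f ((a+b)/2) + f b) - (1/(b-a)) * ∫ x in a..b, f x
      = (1/(b-a)) * ((∫ x in a..(a+b)/2, (x - (5*a+b)/6) * f' x)
          + ∫ x in (a+b)/2..b, (x - (a+5*b)/6) * f' x) := by
  have ham : a ≤ (a+b)/2 := by linarith
  have hmb : (a+b)/2 ≤ b := by linarith
  set m := (a+b)/2
  have hintegral {u v : ℝ} (hu : a ≤ u) (huv : u ≤ v) (hv : v ≤ b) (c : ℝ) :=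
    integral_sub_mul_deriv_eq (f' := f') c huv (hf.mono (Icc_subset_Icc hu hv))
      (fun x hx => hderiv x (Ioo_subset_Ioo hu hv hx))
      (hf'.mono_set (by simpa only [uIcc_of_le huv, uIcc_of_le hab.le] using Icc_subset_Icc hu hv))
  have hfint {u v : ℝ} (hu : a ≤ u) (huv : u ≤ v) (hv : v ≤ b) :
      IntervalIntegrable f volume u v :=
    (hf.mono (Icc_subset_Icc hu hv)).intervalIntegrable_of_Icc huv
  rw [hintegral le_rfl ham hmb, hintegral ham hmb le_rfl,
    ← integral_add_adjacent_intervals (hfint le_rfl ham hmb) (hfint ham hmb le_rfl)]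
  have hba : b - a ≠ 0 := by linarith
  field_simp
  ring

theorem le_secant_of_mem_Icc {g : ℝ → ℝ} {a b x : ℝ} (hab : a < b) (hx : x ∈ Icc a b)
    (hg : ∀ t ∈ Icc (0:ℝ) 1, g (t * b + (1 - t) * a) ≤ t * g b + (1 - t) * g a) :
    g x ≤ ((x - a) * g b + (b - x) * g a) / (b - a) := by
  have hba : 0 < b - a := by linarith
  have ht : (x - a) / (b - a) ∈ Icc (0:ℝ) 1 :=
    ⟨div_nonneg (by linarith [hx.1]) hba.le, (div_le_one hba).2 (by linarith [hx.2])⟩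
  have hcombo : (x - a) / (b - a) * b + (1 - (x - a) / (b - a)) * a = x := by
    field_simp
    ring
  have hconv := hg _ ht
  rw [hcombo] at hconv
  calc g x ≤ (x - a) / (b - a) * g b + (1 - (x - a) / (b - a)) * g a := hconv
    _ = ((x - a) * g b + (b - x) * g a) / (b - a) := by
      field_simp
      ring

theorem abs_integral_sub_mul_le_s7 {φ ψ : ℝ → ℝ} {u v : ℝ} (c : ℝ) (huv : u ≤ v)
    (hψ : IntervalIntegrable (fun x => |x - c| * ψ x) volume u v)
    (hφψ : ∀ x ∈ Icc u v, |φ x| ≤ ψ x) :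
    |∫ x in u..v, (x - c) * φ x| ≤ ∫ x in u..v, |x - c| * ψ x := by
  rw [← Real.norm_eq_abs]
  refine norm_integral_le_of_norm_le huv (Filter.Eventually.of_forall fun x hx => ?_) hψ
  rw [Real.norm_eq_abs, abs_mul]
  exact mul_le_mul_of_nonneg_left (hφψ x (Ioc_subset_Icc_self hx)) (abs_nonneg _)

theorem integral_abs_sub_mul_eq {g G : ℝ → ℝ} {u v c : ℝ} (huc : u ≤ c) (hcv : c ≤ v)
    (hg : Continuous g) (hG : ∀ x, HasDerivAt G ((x - c) * g x) x) :
    ∫ x in u..v, |x - c| * g x = G u + G v - 2 * G c := by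
  have hderiv_int : ∀ p q : ℝ, IntervalIntegrable (fun x => (x - c) * g x) volume p q :=
    fun p q => ((continuous_sub_right c).mul hg).intervalIntegrable p q
  have hint : ∀ p q : ℝ, IntervalIntegrable (fun x => |x - c| * g x) volume p q := fun p q =>
    ((continuous_sub_right c).abs.mul hg).intervalIntegrable p q
  have hleft : ∫ x in u..c, |x - c| * g x = -(G c - G u) := by
    rw [← integral_eq_sub_of_hasDerivAt (fun x _ => hG x) (hderiv_int _ _),
      ← intervalIntegral.integral_neg]
    refine integral_congr fun x hx => ?_
    rw [uIcc_of_le huc] at hx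
    simp only [abs_of_nonpos (sub_nonpos.2 hx.2), neg_mul]
  have hright : ∫ x in c..v, |x - c| * g x = G v - G c := by
    rw [← integral_eq_sub_of_hasDerivAt (fun x _ => hG x) (hderiv_int _ _)]
    refine integral_congr fun x hx => ?_
    rw [uIcc_of_le hcv] at hx
    simp only [abs_of_nonneg (sub_nonneg.2 hx.1)]
  rw [← integral_add_adjacent_intervals (hint u c) (hint c v), hleft, hright]
  ring

theorem integral_simpson_kernel_mul_affine (a b A B : ℝ) (hab : a ≤ b) :
    (∫ x in a..(a+b)/2, |x - (5*a+b)/6| * ((x - a) * A + (b - x) * B))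
      + ∫ x in (a+b)/2..b, |x - (a+5*b)/6| * ((x - a) * A + (b - x) * B)
    = 5 * (b - a)^3 / 72 * (A + B) := by
  have hprim (c x : ℝ) : HasDerivAt
      (fun y => (A - B) * y^3 / 3 + (b*B - a*A - (A - B) * c) * y^2 / 2 - (b*B - a*A) * c * y)
      ((x - c) * ((x - a) * A + (b - x) * B)) x := by
    refine ((((hasDerivAt_pow 3 x).const_mul (A - B)).div_const 3).add
      (((hasDerivAt_pow 2 x).const_mul (b*B - a*A - (A - B) * c)).div_const 2)).sub
      ((hasDerivAt_id' x).const_mul ((b*B - a*A) * c)) |>.congr_deriv ?_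
    norm_num
    ring
  have hcont : Continuous fun x => (x - a) * A + (b - x) * B := by fun_prop
  rw [integral_abs_sub_mul_eq (by linarith) (by linarith) hcont (hprim _),
    integral_abs_sub_mul_eq (by linarith) (by linarith) hcont (hprim _)]
  ring

/-- Sarıkaya et al.: Simpson-type inequality for a differentiable `f` whose derivative
has convex absolute value on `[a,b]`. -/
theorem simpson_convex_abs_deriv
    (I : Set ℝ) (hIc : I.OrdConnected) (f f' : ℝ → ℝ) (a b : ℝ)
    (ha : a ∈ I) (hb : b ∈ I) (hab : a < b)
    (hderiv : ∀ x ∈ interior I, HasDerivAt f (f' x) x)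
    (hcont : ContinuousOn f I)
    (hfint : IntervalIntegrable f' volume a b)
    (hconv : ∀ x ∈ Set.Icc a b, ∀ y ∈ Set.Icc a b, ∀ t ∈ Set.Icc (0:ℝ) 1,
      |f' (t*x + (1-t)*y)| ≤ t * |f' x| + (1-t) * |f' y|) :
    |(1/6) * (f a + 4 * f ((a+b)/2) + f b) - (1/(b-a)) * ∫ x in a..b, f x|
      ≤ (5*(b-a)/72) * (|f' a| + |f' b|) := by
  have hIcc : Icc a b ⊆ I := hIc.out ha hb
  have hIoo : Ioo a b ⊆ interior I :=
    interior_maximal (Ioo_subset_Icc_self.trans hIcc) isOpen_Ioo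
  have hsecant (x : ℝ) (hx : x ∈ Icc a b) :
      |f' x| ≤ ((x - a) * |f' b| + (b - x) * |f' a|) / (b - a) :=
    le_secant_of_mem_Icc (g := fun x => |f' x|) hab hx
      (hconv b (right_mem_Icc.2 hab.le) a (left_mem_Icc.2 hab.le))
  have hpiece {u v : ℝ} (c : ℝ) (hu : a ≤ u) (huv : u ≤ v) (hv : v ≤ b) :
      |∫ x in u..v, (x - c) * f' x|
        ≤ (∫ x in u..v, |x - c| * ((x - a) * |f' b| + (b - x) * |f' a|)) / (b - a) := by
    simp only [← intervalIntegral.integral_div, mul_div_assoc]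
    exact abs_integral_sub_mul_le_s7 c huv (Continuous.intervalIntegrable (by fun_prop) _ _)
      fun x hx => hsecant x ⟨hu.trans hx.1, hx.2.trans hv⟩
  have hba : 0 < b - a := by linarith
  have ham : a ≤ (a+b)/2 := by linarith
  have hmb : (a+b)/2 ≤ b := by linarith
  rw [simpson_sub_average_eq hab (hcont.mono hIcc) (fun x hx => hderiv x (hIoo hx)) hfint,
    abs_mul, abs_of_pos (one_div_pos.2 hba)]
  refine (mul_le_mul_of_nonneg_left ((abs_add_le _ _).trans (add_le_add
    (hpiece _ le_rfl ham hmb) (hpiece _ ham hmb le_rfl))) (by positivity)).trans_eq ?_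
  rw [← add_div, integral_simpson_kernel_mul_affine a b _ _ hab.le]
  field_simp
  ring
end

section
/- Let h : J ⊂ ℝ → ℝ be a non-negative function, let f : I → ℝ be h-convex with f ∈ L¹([a,b]) where a, b ∈ I, a < b, and suppose h(1/2) > 0. Then (1/(2 h(1/2))) f((a+b)/2) ≤ (1/(b−a)) ∫_a^b f(x) dx ≤ [f(a) + f(b)] ∫_0^1 h(t) dt. -/
/-! Taking `t = 1/2` in the defining inequality gives
`f((a+b)/2) ≤ h(1/2) (f x + f (a+b-x))`; integrating over `[a, b]`, where the reflection
`x ↦ a+b-x` preserves the integral, yields the left inequality. For the right one, substitute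
`x = t a + (1-t) b` and integrate the defining inequality over `t ∈ (0, 1)`. -/

open MeasureTheory Set intervalIntegral

section Reparametrization

variable {f : ℝ → ℝ} {a b : ℝ}

theorem IntervalIntegrable.comp_add_sub (hf : IntervalIntegrable f volume a b) :
    IntervalIntegrable (fun x ↦ f (a + b - x)) volume a b := by
  simpa using (hf.comp_sub_left (a + b)).symm

theorem integral_comp_add_sub (f : ℝ → ℝ) (a b : ℝ) :
    ∫ x in a..b, f (a + b - x) = ∫ x in a..b, f x := by
  simp [integral_comp_sub_left]

theorem IntervalIntegrable.comp_convexComb (hf : IntervalIntegrable f volume a b) :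
    IntervalIntegrable (fun t ↦ f (t * a + (1 - t) * b)) volume 0 1 := by
  rcases eq_or_ne a b with rfl | hab
  · simp only [← add_mul, add_sub_cancel, one_mul]
    exact intervalIntegrable_const
  have := (hf.comp_add_right b).comp_mul_left (c := a - b)
  rw [div_self (sub_ne_zero.2 hab), sub_self, zero_div] at this
  convert this.symm using 3 with t
  ring

theorem integral_zero_one_comp_convexComb (f : ℝ → ℝ) (hab : a ≠ b) :
    ∫ t in (0 : ℝ)..1, f (t * a + (1 - t) * b) = (b - a)⁻¹ * ∫ x in a..b, f x := by
  have hsub : ∀ t : ℝ, t * a + (1 - t) * b = (a - b) * t + b := fun t ↦ by ring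
  simp only [hsub]
  rw [integral_comp_mul_add f (sub_ne_zero.2 hab), integral_symm]
  simp only [mul_zero, zero_add, mul_one, sub_add_cancel, smul_eq_mul]
  rw [← neg_sub b a, inv_neg, neg_mul_neg]

end Reparametrization

/-- The inequality defining `f ∈ SX(h, I)`. -/
def HConvexOn (h : ℝ → ℝ) (I : Set ℝ) (f : ℝ → ℝ) : Prop :=
  ∀ x ∈ I, ∀ y ∈ I, ∀ t ∈ Ioo (0 : ℝ) 1, f (t * x + (1 - t) * y) ≤ h t * f x + h (1 - t) * f y

namespace HConvexOn

variable {h f : ℝ → ℝ} {I : Set ℝ} {a b : ℝ}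

theorem apply_midpoint_le (hf : HConvexOn h I f) {x y : ℝ} (hx : x ∈ I) (hy : y ∈ I) :
    f ((x + y) / 2) ≤ h (1 / 2) * (f x + f y) := by
  have := hf x hx y hy (1 / 2) (by norm_num)
  rw [show 1 - (1 : ℝ) / 2 = 1 / 2 by norm_num] at this
  convert this using 2 <;> ring

theorem mul_apply_midpoint_le_integral (hf : HConvexOn h I f) (hab : a ≤ b)
    (hI : Icc a b ⊆ I) (hfint : IntervalIntegrable f volume a b) :
    (b - a) * f ((a + b) / 2) ≤ 2 * h (1 / 2) * ∫ x in a..b, f x := by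
  have hpair : ∀ x ∈ Icc a b, f ((a + b) / 2) ≤ h (1 / 2) * (f x + f (a + b - x)) := by
    intro x hx
    have hx' : a + b - x ∈ Icc a b := ⟨by linarith [hx.2], by linarith [hx.1]⟩
    simpa using hf.apply_midpoint_le (hI hx) (hI hx')
  calc (b - a) * f ((a + b) / 2) = ∫ _ in a..b, f ((a + b) / 2) := by simp
    _ ≤ ∫ x in a..b, h (1 / 2) * (f x + f (a + b - x)) :=
      integral_mono_on hab intervalIntegrable_const
        ((hfint.add hfint.comp_add_sub).const_mul _) hpair
    _ = 2 * h (1 / 2) * ∫ x in a..b, f x := by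
      rw [intervalIntegral.integral_const_mul, integral_add hfint hfint.comp_add_sub,
        integral_comp_add_sub]
      ring

theorem integral_comp_convexComb_le (hf : HConvexOn h I f) (ha : a ∈ I) (hb : b ∈ I)
    (hfint : IntervalIntegrable (fun t ↦ f (t * a + (1 - t) * b)) volume 0 1)
    (hhint : IntervalIntegrable h volume 0 1) :
    ∫ t in (0 : ℝ)..1, f (t * a + (1 - t) * b) ≤ (f a + f b) * ∫ t in (0 : ℝ)..1, h t := by
  have hhint' : IntervalIntegrable (fun t ↦ h (1 - t)) volume 0 1 := by
    simpa using hhint.comp_add_sub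
  calc ∫ t in (0 : ℝ)..1, f (t * a + (1 - t) * b)
      ≤ ∫ t in (0 : ℝ)..1, h t * f a + h (1 - t) * f b :=
        integral_mono_on_of_le_Ioo zero_le_one hfint
          ((hhint.mul_const _).add (hhint'.mul_const _)) fun t ht ↦ hf a ha b hb t ht
    _ = (f a + f b) * ∫ t in (0 : ℝ)..1, h t := by
      rw [integral_add (hhint.mul_const _) (hhint'.mul_const _),
        intervalIntegral.integral_mul_const, intervalIntegral.integral_mul_const, show ∫ t in (0 : ℝ)..1, h (1 - t) = ∫ t in (0 : ℝ)..1, h t by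
        simp [integral_comp_sub_left]]
      ring

end HConvexOn

theorem hermite_hadamard_hconvex_general
    (I : Set ℝ) (hIc : I.OrdConnected) (h f : ℝ → ℝ) (a b : ℝ)
    (ha : a ∈ I) (hb : b ∈ I) (hab : a < b)
    (hhalf : 0 < h (1/2))
    (hfint : IntervalIntegrable f volume a b)
    (hhint : IntervalIntegrable h volume 0 1)
    (hconv : ∀ x ∈ I, ∀ y ∈ I, ∀ t ∈ Set.Ioo (0:ℝ) 1,
      f (t*x + (1-t)*y) ≤ h t * f x + h (1-t) * f y) :
    (1/(2 * h (1/2))) * f ((a+b)/2) ≤ (1/(b-a)) * ∫ x in a..b, f x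
      ∧ (1/(b-a)) * ∫ x in a..b, f x ≤ (f a + f b) * ∫ t in (0:ℝ)..1, h t := by
  have hf : HConvexOn h I f := hconv
  have hba : 0 < b - a := sub_pos.2 hab
  constructor
  · have := hf.mul_apply_midpoint_le_integral hab.le (hIc.out ha hb) hfint
    rw [one_div_mul_eq_div, one_div_mul_eq_div, div_le_div_iff₀ (by positivity) hba]
    linarith
  · rw [one_div, ← integral_zero_one_comp_convexComb f hab.ne]
    exact hf.integral_comp_convexComb_le ha hb hfint.comp_convexComb hhint

/-- Hermite–Hadamard inequality for `h`-convex functions (Sarıkaya et al.):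
`(1/(2h(1/2))) f((a+b)/2) ≤ (1/(b−a)) ∫_a^b f ≤ [f(a)+f(b)] ∫_0^1 h`. -/
theorem hermite_hadamard_hconvex
    (I : Set ℝ) (hIc : I.OrdConnected) (h f : ℝ → ℝ) (a b : ℝ)
    (ha : a ∈ I) (hb : b ∈ I) (hab : a < b)
    (hh0 : ∀ t ∈ Set.Ioo (0:ℝ) 1, 0 ≤ h t)
    (hhalf : 0 < h (1/2))
    (hf0 : ∀ x ∈ I, 0 ≤ f x)
    (hfint : IntervalIntegrable f volume a b)
    (hhint : IntervalIntegrable h volume 0 1)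
    (hconv : ∀ x ∈ I, ∀ y ∈ I, ∀ t ∈ Set.Ioo (0:ℝ) 1,
      f (t*x + (1-t)*y) ≤ h t * f x + h (1-t) * f y) :
    (1/(2 * h (1/2))) * f ((a+b)/2) ≤ (1/(b-a)) * ∫ x in a..b, f x
      ∧ (1/(b-a)) * ∫ x in a..b, f x ≤ (f a + f b) * ∫ t in (0:ℝ)..1, h t :=
  hermite_hadamard_hconvex_general I hIc h f a b ha hb hab hhalf hfint hhint hconv
end

section
/- Let h : J ⊂ ℝ → ℝ be a non-negative function with h(1/2) > 0, let a < b be reals, let q ≥ 1, and let g : [a,b] → [0,∞) be integrable such that g^q is h-concave on [a,b]. Then ∫_0^1 g(t a + (1−t) b)^q dt ≤ (1/(2 h(1/2))) g((a+b)/2)^q. -/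
open MeasureTheory Set

/-!
Apply `h`-concavity of `g ^ q` at `t = 1/2` to the two points `t a + (1 - t) b` and
`(1 - t) a + t b`, whose midpoint is `(a + b) / 2`: with `F t = g (t a + (1 - t) b) ^ q` this gives
`h (1/2) (F t + F (1 - t)) ≤ g ((a + b) / 2) ^ q`. Integrating over `[0, 1]`, the substitution
`t ↦ 1 - t` turns the left side into `2 h (1/2) ∫ F`.
-/

def HConcaveOn (h : ℝ → ℝ) (s : Set ℝ) (f : ℝ → ℝ) : Prop :=
  ∀ x ∈ s, ∀ y ∈ s, ∀ t ∈ Ioo (0 : ℝ) 1, h t * f x + h (1 - t) * f y ≤ f (t * x + (1 - t) * y)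

theorem HConcaveOn.mul_add_le_midpoint {h f : ℝ → ℝ} {s : Set ℝ} (hf : HConcaveOn h s f)
    {x y : ℝ} (hx : x ∈ s) (hy : y ∈ s) : h (1 / 2) * (f x + f y) ≤ f ((x + y) / 2) := by
  have := hf x hx y hy (1 / 2) ⟨by norm_num, by norm_num⟩
  rw [show (1 : ℝ) - 1 / 2 = 1 / 2 by norm_num, ← mul_add] at this
  convert this using 2
  ring

/-- `0 ≤ M` covers a non-integrable `F`, whose integral is `0` by convention. -/
theorem two_mul_intervalIntegral_le_of_add_reflect_le {F : ℝ → ℝ} {a b M : ℝ} (hab : a ≤ b)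
    (hM : 0 ≤ M) (hF : ∀ x ∈ Ioo a b, F x + F (a + b - x) ≤ M) :
    2 * ∫ x in a..b, F x ≤ (b - a) * M := by
  by_cases hint : IntervalIntegrable F volume a b
  · have hreflect : IntervalIntegrable (fun x => F (a + b - x)) volume a b := by
      simpa using (hint.comp_sub_left (a + b)).symm
    have hsymm : ∫ x in a..b, F (a + b - x) = ∫ x in a..b, F x := by simp
    calc 2 * ∫ x in a..b, F x = ∫ x in a..b, (F x + F (a + b - x)) := by
          rw [intervalIntegral.integral_add hint hreflect, hsymm]; ring
      _ ≤ ∫ _ in a..b, M :=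
          intervalIntegral.integral_mono_on_of_le_Ioo hab (hint.add hreflect)
            intervalIntegrable_const hF
      _ = (b - a) * M := by simp
  · rw [intervalIntegral.integral_undef hint]
    simpa using mul_nonneg (sub_nonneg.2 hab) hM

theorem hconcave_power_integral_bound_general
    (h g : ℝ → ℝ) (a b : ℝ) (hab : a < b) (q : ℝ)
    (hhalf : 0 < h (1/2))
    (hg0 : ∀ x ∈ Set.Icc a b, 0 ≤ g x)
    (hconc : ∀ x ∈ Set.Icc a b, ∀ y ∈ Set.Icc a b, ∀ t ∈ Set.Ioo (0:ℝ) 1,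
      h t * g x ^ q + h (1-t) * g y ^ q ≤ g (t*x + (1-t)*y) ^ q) :
    (∫ t in (0:ℝ)..1, g (t*a + (1-t)*b) ^ q)
      ≤ (1/(2 * h (1/2))) * g ((a+b)/2) ^ q := by
  have hconcave : HConcaveOn h (Icc a b) (fun x => g x ^ q) := hconc
  have hcombo : ∀ t ∈ Icc (0 : ℝ) 1, t * a + (1 - t) * b ∈ Icc a b := fun t ht => by
    simpa using convex_Icc a b (left_mem_Icc.2 hab.le) (right_mem_Icc.2 hab.le) ht.1
      (sub_nonneg.2 ht.2) (add_sub_cancel t 1)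
  have hmid : 0 ≤ g ((a + b) / 2) ^ q :=
    Real.rpow_nonneg (hg0 _ ⟨by linarith, by linarith⟩) q
  have hpair : ∀ t ∈ Ioo (0 : ℝ) 1, h (1 / 2) * g (t * a + (1 - t) * b) ^ q
      + h (1 / 2) * g ((1 - t) * a + (1 - (1 - t)) * b) ^ q ≤ g ((a + b) / 2) ^ q := by
    intro t ht
    have := hconcave.mul_add_le_midpoint (hcombo t (Ioo_subset_Icc_self ht))
      (hcombo (1 - t) ⟨by linarith [ht.2], by linarith [ht.1]⟩)
    rw [← mul_add]
    convert this using 3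
    ring
  have := two_mul_intervalIntegral_le_of_add_reflect_le zero_le_one hmid
    (by simpa only [zero_add] using hpair)
  rw [intervalIntegral.integral_const_mul] at this
  rw [one_div, inv_mul_eq_div, le_div_iff₀ (by positivity)]
  linarith

/-- Intermediate estimate from the Hermite–Hadamard inequality for `h`-concave functions:
if `g ≥ 0` on `[a,b]` and `g^q` is `h`-concave there, then
`∫_0^1 g(ta+(1−t)b)^q dt ≤ (1/(2h(1/2))) g((a+b)/2)^q`. -/
theorem hconcave_power_integral_bound
    (h g : ℝ → ℝ) (a b : ℝ) (hab : a < b) (q : ℝ) (hq : 1 ≤ q)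
    (hh0 : ∀ t ∈ Set.Ioo (0:ℝ) 1, 0 ≤ h t)
    (hhalf : 0 < h (1/2))
    (hg0 : ∀ x ∈ Set.Icc a b, 0 ≤ g x)
    (hgint : IntervalIntegrable g volume a b)
    (hconc : ∀ x ∈ Set.Icc a b, ∀ y ∈ Set.Icc a b, ∀ t ∈ Set.Ioo (0:ℝ) 1,
      h t * g x ^ q + h (1-t) * g y ^ q ≤ g (t*x + (1-t)*y) ^ q) :
    (∫ t in (0:ℝ)..1, g (t*a + (1-t)*b) ^ q)
      ≤ (1/(2 * h (1/2))) * g ((a+b)/2) ^ q :=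
  hconcave_power_integral_bound_general h g a b hab q hhalf hg0 hconc
end

section
/- Let a, b ∈ ℝ with 0 < a < b, let n ∈ ℕ with n > 1, and let p, q > 1 with 1/p + 1/q = 1. Then |L_n^n(a,b) − (1/3)[A(a^n, b^n) + 2 A^n(a,b)]| ≤ n ((b−a)/6) ((1 + 2^{p+1})/(3(p+1)))^{1/p} (1/(q+1))^{1/q} [ a^{n−1}/2 + b^{n−1} (2 − (1/2)^q)^{1/q} ], where A(α,β) = (α+β)/2 is the arithmetic mean and L_n(α,β) = [ (β^{n+1} − α^{n+1}) / ((n+1)(β−α)) ]^{1/n} is the generalized log-mean, so that L_n^n(a,b) = (1/(b−a)) ∫_a^b x^n dx. -/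
/-!
The average of a convex `f` over `[a, b]` lies between `f m` (`m` the midpoint) and
`(f m + (f a + f b) / 2) / 2` (Hermite–Hadamard on each half), so it differs from the Simpson
value `(1/3) ((f a + f b) / 2 + 2 f m)` by at most a third of the gap `(f a + f b) / 2 - f m`.
For `f x = xⁿ` the gap is at most `n (b - a) bⁿ⁻¹ / 4`, and the constant on the right-hand side is
at least `1/2` by the weighted AM–GM inequality, so the term with `aⁿ⁻¹` is pure slack.
-/

open Real
open MeasureTheory intervalIntegral Set

section HermiteHadamard

variable {f : ℝ → ℝ} {a b : ℝ}

theorem ConvexOn.two_mul_map_midpoint_le (hf : ConvexOn ℝ (Icc a b) f) {x : ℝ}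
    (hx : x ∈ Icc a b) : 2 * f ((a + b) / 2) ≤ f x + f (a + b - x) := by
  have hx' : a + b - x ∈ Icc a b := ⟨by linarith [hx.2], by linarith [hx.1]⟩
  have h := hf.2 hx hx' (by norm_num : (0 : ℝ) ≤ 1 / 2) (by norm_num : (0 : ℝ) ≤ 1 / 2)
    (by norm_num)
  rw [show (1 / 2 : ℝ) • x + (1 / 2 : ℝ) • (a + b - x) = (a + b) / 2 by
    simp only [smul_eq_mul]; ring] at h
  simp only [smul_eq_mul] at h
  linarith

theorem ConvexOn.map_add_map_reflect_le (hf : ConvexOn ℝ (Icc a b) f) (hab : a ≤ b) {x : ℝ}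
    (hx : x ∈ Icc a b) : f x + f (a + b - x) ≤ f a + f b := by
  rw [← segment_eq_Icc hab] at hx
  obtain ⟨s, t, hs, ht, hst, rfl⟩ := hx
  have ha : a ∈ Icc a b := left_mem_Icc.2 hab
  have hb : b ∈ Icc a b := right_mem_Icc.2 hab
  have h₁ := hf.2 ha hb hs ht hst
  have h₂ := hf.2 ha hb ht hs (by linarith)
  rw [show a + b - (s • a + t • b) = t • a + s • b by
    simp only [smul_eq_mul]; linear_combination -(a + b) * hst]
  simp only [smul_eq_mul] at h₁ h₂
  linear_combination h₁ + h₂ + (f a + f b) * hst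

theorem ContinuousOn.comp_reflect (hc : ContinuousOn f (Icc a b)) :
    ContinuousOn (fun x => f (a + b - x)) (Icc a b) :=
  hc.comp (by fun_prop) fun x hx => ⟨by linarith [hx.2], by linarith [hx.1]⟩

theorem two_mul_integral_eq_integral_add_reflect (hc : ContinuousOn f (Icc a b)) (hab : a ≤ b) :
    2 * ∫ x in a..b, f x = ∫ x in a..b, (f x + f (a + b - x)) := by
  rw [two_mul, integral_add (hc.intervalIntegrable_of_Icc hab)
    (hc.comp_reflect.intervalIntegrable_of_Icc hab)]
  congr 1
  simp [integral_comp_sub_left f (a + b)]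

theorem ConvexOn.mul_map_midpoint_le_integral (hf : ConvexOn ℝ (Icc a b) f)
    (hc : ContinuousOn f (Icc a b)) (hab : a ≤ b) :
    (b - a) * f ((a + b) / 2) ≤ ∫ x in a..b, f x := by
  have h := integral_mono_on hab (intervalIntegrable_const (μ := volume))
    ((hc.add hc.comp_reflect).intervalIntegrable_of_Icc hab)
    fun x hx => hf.two_mul_map_midpoint_le hx
  simp only [Pi.add_apply] at h
  rw [intervalIntegral.integral_const, ← two_mul_integral_eq_integral_add_reflect hc hab,
    smul_eq_mul] at h
  linarith

theorem ConvexOn.integral_le_mul_add_div_two (hf : ConvexOn ℝ (Icc a b) f)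
    (hc : ContinuousOn f (Icc a b)) (hab : a ≤ b) :
    ∫ x in a..b, f x ≤ (b - a) * (f a + f b) / 2 := by
  have h := integral_mono_on hab ((hc.add hc.comp_reflect).intervalIntegrable_of_Icc hab)
    (intervalIntegrable_const (μ := volume)) fun x hx => hf.map_add_map_reflect_le hab hx
  simp only [Pi.add_apply] at h
  rw [intervalIntegral.integral_const, ← two_mul_integral_eq_integral_add_reflect hc hab,
    smul_eq_mul] at h
  linarith

theorem ConvexOn.abs_average_sub_simpson_le (hf : ConvexOn ℝ (Icc a b) f)
    (hc : ContinuousOn f (Icc a b)) (hab : a < b) :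
    |(∫ x in a..b, f x) / (b - a) - 1 / 3 * ((f a + f b) / 2 + 2 * f ((a + b) / 2))|
      ≤ ((f a + f b) / 2 - f ((a + b) / 2)) / 3 := by
  set m := (a + b) / 2 with hm
  have ham : a ≤ m := by linarith
  have hmb : m ≤ b := by linarith
  have hc₁ : ContinuousOn f (Icc a m) := hc.mono (Icc_subset_Icc_right hmb)
  have hc₂ : ContinuousOn f (Icc m b) := hc.mono (Icc_subset_Icc_left ham)
  have hleft := (hf.subset (Icc_subset_Icc_right hmb) (convex_Icc a m)).integral_le_mul_add_div_two
    hc₁ ham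
  have hright := (hf.subset (Icc_subset_Icc_left ham) (convex_Icc m b)).integral_le_mul_add_div_two
    hc₂ hmb
  have hsplit := integral_add_adjacent_intervals (μ := volume) (hc₁.intervalIntegrable_of_Icc ham)
    (hc₂.intervalIntegrable_of_Icc hmb)
  have hba : 0 < b - a := sub_pos.2 hab
  have hlow : f m ≤ (∫ x in a..b, f x) / (b - a) := by
    rw [le_div_iff₀ hba, mul_comm]
    exact hf.mul_map_midpoint_le_integral hc hab.le
  have hup : (∫ x in a..b, f x) / (b - a) ≤ (f m + (f a + f b) / 2) / 2 := by
    rw [div_le_iff₀ hba, ← hsplit]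
    rw [show m - a = (b - a) / 2 by linarith] at hleft
    rw [show b - m = (b - a) / 2 by linarith] at hright
    linarith
  rw [abs_le]
  constructor <;> linarith

end HermiteHadamard

theorem add_pow_div_two_sub_midpoint_pow_le {a b : ℝ} (ha : 0 ≤ a) (hab : a ≤ b) (n : ℕ) :
    (a ^ n + b ^ n) / 2 - ((a + b) / 2) ^ n ≤ n * (b - a) * b ^ (n - 1) / 4 := by
  set m := (a + b) / 2 with hm
  have ham : a ≤ m := by linarith
  have hmb : m ≤ b := by linarith
  have hlow : a ^ n ≤ m ^ n := pow_le_pow_left₀ ha ham n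
  have hup : b ^ n - m ^ n ≤ (b - m) * n * b ^ (n - 1) := by
    have h := (le_abs_self _).trans (abs_pow_sub_pow_le b m n)
    rwa [abs_of_nonneg (sub_nonneg.2 hmb), abs_of_nonneg (ha.trans ham),
      abs_of_nonneg (ha.trans (ham.trans hmb)), max_eq_left hmb] at h
  rw [show b - m = (b - a) / 2 by linarith] at hup
  linarith

theorem half_le_simpson_const {p q : ℝ} (hp : 1 < p) (hq : 1 < q) (hpq : 1 / p + 1 / q = 1) :
    1 / 2 ≤ ((1 + 2 ^ (p + 1)) / (3 * (p + 1))) ^ (1 / p) * (1 / (q + 1)) ^ (1 / q)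
      * (2 - (1 / 2) ^ q) ^ (1 / q) := by
  set u := 3 * (p + 1) / 2 with hu
  set v := 2 * (q + 1) / 3 with hv
  have hu0 : 0 < u := by positivity
  have hv0 : 0 < v := by positivity
  have hX : 2 * (u ^ (1 / p))⁻¹ ≤ ((1 + 2 ^ (p + 1)) / (3 * (p + 1))) ^ (1 / p) := by
    calc 2 * (u ^ (1 / p))⁻¹ = (2 ^ p / u) ^ (1 / p) := by
          rw [div_rpow (by positivity) hu0.le, ← rpow_mul zero_le_two,
            mul_one_div_cancel (by positivity), rpow_one]
          ring
      _ ≤ _ := by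
          refine rpow_le_rpow (by positivity) ?_ (by positivity)
          rw [hu, rpow_add zero_lt_two, rpow_one, div_le_div_iff₀ (by positivity) (by positivity)]
          nlinarith
  have hY : (v ^ (1 / q))⁻¹ ≤ (1 / (q + 1)) ^ (1 / q) * (2 - (1 / 2) ^ q) ^ (1 / q) := by
    have hhalf : (1 / 2 : ℝ) ^ q ≤ 1 / 2 := by
      simpa using rpow_le_rpow_of_exponent_ge (by norm_num : (0 : ℝ) < 1 / 2) (by norm_num) hq.le
    rw [← mul_rpow (by positivity) (by linarith), ← inv_rpow hv0.le]
    gcongr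
    rw [hv]
    field_simp
    linarith
  have hAMGM : u ^ (1 / p) * v ^ (1 / q) ≤ 4 := by
    refine (geom_mean_le_arith_mean2_weighted (by positivity) (by positivity) hu0.le hv0.le
      hpq).trans ?_
    have hsum : 1 / p * u + 1 / q * v = 13 / 6 + 3 / 2 * (1 / p) + 2 / 3 * (1 / q) := by
      rw [hu, hv]
      field_simp
      ring
    linarith [one_div_pos.2 (zero_lt_one.trans hp), one_div_pos.2 (zero_lt_one.trans hq)]
  calc 1 / 2 ≤ 2 * (u ^ (1 / p))⁻¹ * (v ^ (1 / q))⁻¹ := by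
        rw [mul_assoc, ← mul_inv, ← div_eq_mul_inv, le_div_iff₀ (by positivity)]
        linarith
    _ ≤ _ := by
        rw [mul_assoc _ ((1 / (q + 1)) ^ (1 / q))]
        gcongr

theorem simpson_means_pow_general
    (a b : ℝ) (ha : 0 < a) (hab : a < b) (n : ℕ)
    (p q : ℝ) (hp : 1 < p) (hq : 1 < q) (hpq : 1/p + 1/q = 1) :
    |(b^(n+1) - a^(n+1)) / (((n:ℝ)+1)*(b-a))
        - (1/3) * ((a^n + b^n)/2 + 2 * ((a+b)/2)^n)|
      ≤ (n:ℝ) * ((b-a)/6) * ((1 + 2^(p+1))/(3*(p+1)))^(1/p) * (1/(q+1))^(1/q) *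
        (a^(n-1)/2 + b^(n-1) * (2 - (1/2)^q)^(1/q)) := by
  have hconv : ConvexOn ℝ (Icc a b) (fun x : ℝ => x ^ n) :=
    (convexOn_pow n).subset (fun x hx => mem_Ici.2 (ha.le.trans hx.1)) (convex_Icc a b)
  have hsimpson := hconv.abs_average_sub_simpson_le (continuous_pow n).continuousOn hab
  have hgap := add_pow_div_two_sub_midpoint_pow_le ha.le hab.le n
  have hconst := half_le_simpson_const hp hq hpq
  rw [integral_pow, div_div] at hsimpson
  calc _ ≤ ((a ^ n + b ^ n) / 2 - ((a + b) / 2) ^ n) / 3 := hsimpson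
    _ ≤ n * ((b - a) / 6) * b ^ (n - 1) * (1 / 2) := by linarith
    _ ≤ n * ((b - a) / 6) * b ^ (n - 1) * (((1 + 2 ^ (p + 1)) / (3 * (p + 1))) ^ (1 / p)
          * (1 / (q + 1)) ^ (1 / q) * (2 - (1 / 2) ^ q) ^ (1 / q)) := by
          have hb : 0 < b := ha.trans hab
          gcongr
    _ ≤ _ := by
        have : 0 ≤ n * ((b - a) / 6) * ((1 + 2 ^ (p + 1)) / (3 * (p + 1))) ^ (1 / p)
          * (1 / (q + 1)) ^ (1 / q) * (a ^ (n - 1) / 2) := by positivity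
        linear_combination this

/-- Application to special means: for `0 < a < b`, `n > 1` and conjugate exponents `p, q`,
`|L_n^n(a,b) − (1/3)[A(aⁿ,bⁿ) + 2 Aⁿ(a,b)]|` is bounded by
`n((b−a)/6)((1+2^{p+1})/(3(p+1)))^{1/p} (1/(q+1))^{1/q} [a^{n−1}/2 + b^{n−1}(2−(1/2)^q)^{1/q}]`,
where `A(α,β) = (α+β)/2` and `L_n^n(a,b) = (b^{n+1} − a^{n+1})/((n+1)(b−a))`. -/
theorem simpson_means_pow
    (a b : ℝ) (ha : 0 < a) (hab : a < b) (n : ℕ) (hn : 1 < n)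
    (p q : ℝ) (hp : 1 < p) (hq : 1 < q) (hpq : 1/p + 1/q = 1) :
    |(b^(n+1) - a^(n+1)) / (((n:ℝ)+1)*(b-a))
        - (1/3) * ((a^n + b^n)/2 + 2 * ((a+b)/2)^n)|
      ≤ (n:ℝ) * ((b-a)/6) * ((1 + 2^(p+1))/(3*(p+1)))^(1/p) * (1/(q+1))^(1/q) *
        (a^(n-1)/2 + b^(n-1) * (2 - (1/2)^q)^(1/q)) :=
  simpson_means_pow_general a b ha hab n p q hp hq hpq
end

section
/- Let a, b ∈ ℝ with 0 < a < b. Then |(1/3)[A(a^{-1}, b^{-1}) + 2 A^{-1}(a,b)] − L^{-1}(a,b)| ≤ (b−a) [ 1/a² + 1/b² ], where A(α,β) = (α+β)/2 is the arithmetic mean, A^{-1}(a,b) = 2/(a+b), and L(a,b) = (b−a)/(ln b − ln a) is the logarithmic mean, so that L^{-1}(a,b) = (1/(b−a)) ∫_a^b x^{-1} dx. -/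
/-!
Both the Simpson combination and `L⁻¹(a,b)` are averages of `x ↦ x⁻¹` over `[a, b]`, so both lie
in `[b⁻¹, a⁻¹]`; hence they differ by at most `a⁻¹ - b⁻¹ = (b - a)/(a b) ≤ (b - a)/a²`.
-/

open Real Set

lemma inv_mem_Icc_inv {a b x : ℝ} (ha : 0 < a) (hx : x ∈ Icc a b) : x⁻¹ ∈ Icc b⁻¹ a⁻¹ :=
  ⟨inv_anti₀ (ha.trans_le hx.1) hx.2, inv_anti₀ ha hx.1⟩

lemma simpson_inv_mem_Icc {a b : ℝ} (ha : 0 < a) (hab : a ≤ b) :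
    (1/3) * ((a⁻¹ + b⁻¹)/2 + 2 * (2/(a+b))) ∈ Icc b⁻¹ a⁻¹ := by
  have hmid : 2/(a+b) ∈ Icc b⁻¹ a⁻¹ := by
    rw [← inv_div]
    exact inv_mem_Icc_inv ha ⟨by linarith, by linarith⟩
  have hb : b⁻¹ ≤ a⁻¹ := inv_anti₀ ha hab
  constructor <;> linarith [hmid.1, hmid.2]

lemma log_sub_log_div_sub_mem_Icc {a b : ℝ} (ha : 0 < a) (hab : a < b) :
    (log b - log a)/(b - a) ∈ Icc b⁻¹ a⁻¹ := by
  have hb : 0 < b := ha.trans hab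
  have hba : 0 < b - a := sub_pos.mpr hab
  have hlog : log b - log a = log (b/a) := (log_div hb.ne' ha.ne').symm
  have hlo : (b - a)/b ≤ log b - log a := by
    rw [hlog]
    calc (b - a)/b = 1 - (b/a)⁻¹ := by field_simp
      _ ≤ log (b/a) := one_sub_inv_le_log_of_pos (by positivity)
  have hhi : log b - log a ≤ (b - a)/a := by
    rw [hlog]
    calc log (b/a) ≤ b/a - 1 := log_le_sub_one_of_pos (by positivity)
      _ = (b - a)/a := by field_simp
  constructor
  · rwa [le_div_iff₀ hba, inv_mul_eq_div]
  · rwa [div_le_iff₀ hba, inv_mul_eq_div]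

lemma inv_sub_inv_le_mul_one_div_sq_add {a b : ℝ} (ha : 0 < a) (hab : a ≤ b) :
    a⁻¹ - b⁻¹ ≤ (b - a) * (1/a^2 + 1/b^2) := by
  have hb : 0 < b := ha.trans_le hab
  calc a⁻¹ - b⁻¹ = (b - a) * (a * b)⁻¹ := by field_simp
    _ ≤ (b - a) * (a^2)⁻¹ := by
        gcongr
        rw [sq]
        gcongr
    _ ≤ (b - a) * (1/a^2 + 1/b^2) := by
        rw [← one_div]
        gcongr
        exact le_add_of_nonneg_right (by positivity)

/-- Application to special means: for `0 < a < b`,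
`|(1/3)[A(a⁻¹,b⁻¹) + 2 A⁻¹(a,b)] − L⁻¹(a,b)| ≤ (b−a)[1/a² + 1/b²]`,
where `A(α,β) = (α+β)/2`, `A⁻¹(a,b) = 2/(a+b)` and `L⁻¹(a,b) = (ln b − ln a)/(b−a)`. -/
theorem simpson_means_inv
    (a b : ℝ) (ha : 0 < a) (hab : a < b) :
    |(1/3) * ((a⁻¹ + b⁻¹)/2 + 2 * (2/(a+b))) - (Real.log b - Real.log a)/(b-a)|
      ≤ (b-a) * (1/a^2 + 1/b^2) := by
  rw [← Real.dist_eq]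
  calc _ ≤ a⁻¹ - b⁻¹ :=
        Real.dist_le_of_mem_Icc (simpson_inv_mem_Icc ha hab.le) (log_sub_log_div_sub_mem_Icc ha hab)
    _ ≤ _ := inv_sub_inv_le_mul_one_div_sq_add ha hab.le
end
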